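/- arXiv:1207.3400 — 10 statements merged into one kernel-verified Lean document; each statement's English description precedes it below -/
import Mathlib

section
/- The two collections D1 = {(0,1,2,3,4), (4,3,2,1,0)} and D2 = {(1,0,2,3,4), (4,3,2,0,1)} are both 2-(5,5,1) directed designs on the set {0,1,2,3,4}, and they have no blocks in common. -/
/-- An ordered pair `(x,y)` is covered by an ordered 5-tuple `b` if `x` occurs before `y`. -/
def coversPair {n : ℕ} (b : Fin 5 → Fin n) (x y : Fin n) : Prop :=
  ∃ i j : Fin 5, i < j ∧ b i = x ∧ b j = y

instance {n : ℕ} (b : Fin 5 → Fin n) (x y : Fin n) : Decidable (coversPair b x y) := by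
  unfold coversPair; infer_instance

/-- A 2-(n,5,1) directed design: blocks are injective 5-tuples and every ordered pair of
distinct points is covered by exactly one block. -/
def IsDD (n : ℕ) (D : Finset (Fin 5 → Fin n)) : Prop :=
  (∀ b ∈ D, Function.Injective b) ∧
  ∀ x y : Fin n, x ≠ y → (D.filter (fun b => coversPair b x y)).card = 1

set_option maxRecDepth 8000 in
theorem two_disjoint_DD5 :
    IsDD 5 ({![0,1,2,3,4], ![4,3,2,1,0]} : Finset (Fin 5 → Fin 5)) ∧
    IsDD 5 ({![1,0,2,3,4], ![4,3,2,0,1]} : Finset (Fin 5 → Fin 5)) ∧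
    ({![0,1,2,3,4], ![4,3,2,1,0]} : Finset (Fin 5 → Fin 5)) ∩
      ({![1,0,2,3,4], ![4,3,2,0,1]} : Finset (Fin 5 → Fin 5)) = ∅ := by
  refine ⟨⟨?_, ?_⟩, ⟨?_, ?_⟩, ?_⟩
  · intro b hb
    simp only [Finset.mem_insert, Finset.mem_singleton] at hb
    rcases hb with rfl | rfl <;> decide
  · intro x y hxy
    rw [show ({![0,1,2,3,4], ![4,3,2,1,0]} : Finset (Fin 5 → Fin 5)) =
        insert ![0,1,2,3,4] {![4,3,2,1,0]} from rfl,
      Finset.filter_insert, Finset.filter_singleton]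
    fin_cases x <;> fin_cases y <;> simp_all <;> decide
  · intro b hb
    simp only [Finset.mem_insert, Finset.mem_singleton] at hb
    rcases hb with rfl | rfl <;> decide
  · intro x y hxy
    rw [show ({![1,0,2,3,4], ![4,3,2,0,1]} : Finset (Fin 5 → Fin 5)) =
        insert ![1,0,2,3,4] {![4,3,2,0,1]} from rfl,
      Finset.filter_insert, Finset.filter_singleton]
    fin_cases x <;> fin_cases y <;> simp_all <;> decide
  · decide
end

section
/- The intersection spectrum of 2-(5,5,1) directed designs is I_D(5) = {0,2}; that is, for m ∈ {0,2} there exist two 2-(5,5,1) directed designs on the same 5-set sharing exactly m blocks, and no two such designs share exactly 1 block. -/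
/-- The intersection spectrum of 2-(n,5,1) directed designs. -/
def IDset (n : ℕ) : Set ℕ :=
  {m | ∃ D1 D2 : Finset (Fin 5 → Fin n), IsDD n D1 ∧ IsDD n D2 ∧ (D1 ∩ D2).card = m}

def pairSet : Finset (Fin 5 × Fin 5) := Finset.univ.filter (fun p => p.1 ≠ p.2)

lemma covers_count (b : Fin 5 → Fin 5) (hb : Function.Injective b) :
    (pairSet.filter (fun p => coversPair b p.1 p.2)).card = 10 := by
  have himg : pairSet.filter (fun p => coversPair b p.1 p.2) =
      (Finset.univ.filter (fun q : Fin 5 × Fin 5 => q.1 < q.2)).image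
        (fun q => (b q.1, b q.2)) := by
    ext p
    simp only [pairSet, Finset.mem_filter, Finset.mem_image, Finset.mem_univ, true_and]
    constructor
    · rintro ⟨_, i, j, hij, hi, hj⟩
      exact ⟨(i, j), hij, by simp [hi, hj]⟩
    · rintro ⟨⟨i, j⟩, hij, hp⟩
      refine ⟨?_, i, j, hij, ?_, ?_⟩
      · rw [← hp]; exact fun h => absurd (hb h) hij.ne
      · rw [← hp]
      · rw [← hp]
  rw [himg, Finset.card_image_of_injective]
  · decide
  · intro p q h
    have h1 := congrArg Prod.fst h
    have h2 := congrArg Prod.snd h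
    exact Prod.ext (hb h1) (hb h2)

lemma card_eq_two {D : Finset (Fin 5 → Fin 5)} (h : IsDD 5 D) : D.card = 2 := by
  have key : ∑ p ∈ pairSet, (D.filter (fun b => coversPair b p.1 p.2)).card
      = ∑ b ∈ D, (pairSet.filter (fun p => coversPair b p.1 p.2)).card := by
    simp only [Finset.card_filter]
    exact Finset.sum_comm
  have lhs : ∑ p ∈ pairSet, (D.filter (fun b => coversPair b p.1 p.2)).card = 20 := by
    rw [Finset.sum_congr rfl
      (fun (p : Fin 5 × Fin 5) hp => h.2 p.1 p.2 (by simpa [pairSet] using hp))]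
    rw [Finset.sum_const, smul_eq_mul, mul_one]
    decide
  have rhs : ∑ b ∈ D, (pairSet.filter (fun p => coversPair b p.1 p.2)).card = 10 * D.card := by
    rw [Finset.sum_congr rfl (fun b hb => covers_count b (h.1 b hb))]
    rw [Finset.sum_const, smul_eq_mul, mul_comm]
  omega

lemma struct {D : Finset (Fin 5 → Fin 5)} (h : IsDD 5 D) :
    ∃ b : Fin 5 → Fin 5, Function.Injective b ∧ D = {b, b ∘ Fin.rev} := by
  obtain ⟨b, c, hbc, hD⟩ := Finset.card_eq_two.mp (card_eq_two h)
  have hbD : b ∈ D := by simp [hD]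
  have hcD : c ∈ D := by simp [hD]
  have hbi : Function.Injective b := h.1 b hbD
  have hci : Function.Injective c := h.1 c hcD
  refine ⟨b, hbi, ?_⟩
  -- c covers every reversed pair of b
  have hcov : ∀ i j : Fin 5, i < j → coversPair c (b j) (b i) := by
    intro i j hij
    have hne : b j ≠ b i := fun hh => absurd (hbi hh) hij.ne'
    have hnb : ¬ coversPair b (b j) (b i) := by
      rintro ⟨k, l, hkl, hk, hl⟩
      have hkj : k = j := hbi hk
      have hli : l = i := hbi hl
      rw [hkj, hli] at hkl
      exact absurd hkl (not_lt.mpr hij.le)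
    obtain ⟨d, hd⟩ := Finset.card_eq_one.mp (h.2 (b j) (b i) hne)
    have hdmem : d ∈ D.filter (fun e => coversPair e (b j) (b i)) := by
      rw [hd]; exact Finset.mem_singleton_self d
    rw [Finset.mem_filter] at hdmem
    obtain ⟨hdD, hdc⟩ := hdmem
    rw [hD] at hdD
    rcases Finset.mem_insert.mp hdD with h1 | h1
    · exact absurd (h1 ▸ hdc) hnb
    · exact (Finset.mem_singleton.mp h1) ▸ hdc
  have hcb : Function.Bijective c := Finite.injective_iff_bijective.mp hci
  set e := Equiv.ofBijective c hcb with he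
  set f : Fin 5 → Fin 5 := fun k => e.symm (b k) with hf
  have hcf : ∀ k, c (f k) = b k := fun k => Equiv.ofBijective_apply_symm_apply c hcb (b k)
  have hanti : ∀ i j : Fin 5, i < j → f j < f i := by
    intro i j hij
    obtain ⟨k, l, hkl, hk, hl⟩ := hcov i j hij
    have hk' : k = f j := hci (by rw [hk, hcf])
    have hl' : l = f i := hci (by rw [hl, hcf])
    rw [hk', hl'] at hkl
    exact hkl
  have h01 := hanti 0 1 (by decide)
  have h12 := hanti 1 2 (by decide)
  have h23 := hanti 2 3 (by decide)
  have h34 := hanti 3 4 (by decide)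
  rw [Fin.lt_def] at h01 h12 h23 h34
  have i0 := (f 0).isLt
  have hfr : ∀ k, f k = Fin.rev k := by
    intro k
    fin_cases k <;> (apply Fin.ext; rw [Fin.val_rev]) <;> simp <;> omega
  have hcbr : c = b ∘ Fin.rev := by
    funext i
    have := hcf (Fin.rev i)
    rw [hfr, Fin.rev_rev] at this
    exact this.symm ▸ rfl
  rw [hD, hcbr]

lemma rev_ne (b : Fin 5 → Fin 5) (hbi : Function.Injective b) : b ≠ b ∘ Fin.rev := by
  intro hh
  have := congrFun hh 0
  have h0 : (0 : Fin 5) = Fin.rev 0 := hbi this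
  exact absurd h0 (by decide)

lemma comp_rev_rev (g : Fin 5 → Fin 5) : (g ∘ Fin.rev) ∘ Fin.rev = g := by
  funext i; simp [Function.comp, Fin.rev_rev]

lemma pair_rev_eq (a b : Fin 5 → Fin 5) (hx : a = b ∨ a = b ∘ Fin.rev) :
    ({a, a ∘ Fin.rev} : Finset (Fin 5 → Fin 5)) = {b, b ∘ Fin.rev} := by
  rcases hx with h | h <;> subst h
  · rfl
  · rw [comp_rev_rev, Finset.pair_comm]

lemma covers_iff (b : Fin 5 → Fin 5) (hb : Function.Injective b) (i j : Fin 5) :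
    coversPair b (b i) (b j) ↔ i < j := by
  constructor
  · rintro ⟨k, l, hkl, hk, hl⟩
    rwa [hb hk, hb hl] at hkl
  · intro h; exact ⟨i, j, h, rfl, rfl⟩

lemma isDD_pair (b : Fin 5 → Fin 5) (hb : Function.Injective b) :
    IsDD 5 {b, b ∘ Fin.rev} := by
  have hrevinj : Function.Injective (b ∘ Fin.rev) := hb.comp Fin.rev_injective
  have hner : b ≠ b ∘ Fin.rev := rev_ne b hb
  constructor
  · intro c hc
    rcases Finset.mem_insert.mp hc with rfl | hc
    · exact hb
    · rw [Finset.mem_singleton.mp hc]; exact hrevinj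
  · intro x y hxy
    obtain ⟨i, rfl⟩ := (Finite.injective_iff_bijective.mp hb).2 x
    obtain ⟨j, rfl⟩ := (Finite.injective_iff_bijective.mp hb).2 y
    have hij : i ≠ j := fun hh => hxy (hh ▸ rfl)
    have heqi : b i = (b ∘ Fin.rev) (Fin.rev i) := by
      simp [Function.comp, Fin.rev_rev]
    have heqj : b j = (b ∘ Fin.rev) (Fin.rev j) := by
      simp [Function.comp, Fin.rev_rev]
    have hcrev : coversPair (b ∘ Fin.rev) (b i) (b j) ↔ j < i := by
      rw [heqi, heqj, covers_iff _ hrevinj]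
      exact Fin.rev_lt_rev
    rcases lt_or_gt_of_ne hij with h | h
    · rw [show ({b, b ∘ Fin.rev} : Finset (Fin 5 → Fin 5)) = insert b {b ∘ Fin.rev} from rfl,
        Finset.filter_insert, if_pos ((covers_iff b hb i j).mpr h),
        Finset.filter_singleton, if_neg (by rw [hcrev]; exact not_lt.mpr h.le)]
      simp
    · rw [show ({b, b ∘ Fin.rev} : Finset (Fin 5 → Fin 5)) = insert b {b ∘ Fin.rev} from rfl,
        Finset.filter_insert, if_neg (by rw [covers_iff b hb]; exact not_lt.mpr h.le),
        Finset.filter_singleton, if_pos (hcrev.mpr h)]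
      simp

theorem IDset_five : IDset 5 = {0, 2} := by
  ext m
  simp only [IDset, Set.mem_setOf_eq, Set.mem_insert_iff, Set.mem_singleton_iff]
  constructor
  · rintro ⟨D1, D2, h1, h2, hm⟩
    obtain ⟨b1, hb1, hD1⟩ := struct h1
    obtain ⟨b2, hb2, hD2⟩ := struct h2
    by_cases hcap : D1 = D2
    · right
      rw [← hm, hcap, Finset.inter_self, ← hcap, hD1,
        Finset.card_insert_of_notMem (by simpa using rev_ne b1 hb1), Finset.card_singleton]
    · left
      rw [← hm, Finset.card_eq_zero]
      by_contra hne
      obtain ⟨x, hx⟩ := Finset.nonempty_iff_ne_empty.mpr hne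
      rw [Finset.mem_inter] at hx
      have hx1 : x = b1 ∨ x = b1 ∘ Fin.rev := by
        have := hx.1; rw [hD1] at this; simpa using this
      have hx2 : x = b2 ∨ x = b2 ∘ Fin.rev := by
        have := hx.2; rw [hD2] at this; simpa using this
      have hb12 : b1 = b2 ∨ b1 = b2 ∘ Fin.rev := by
        rcases hx1 with rfl | h1 <;> rcases hx2 with h2 | h2
        · exact Or.inl h2
        · exact Or.inr h2
        · right
          have h3 := congrArg (fun g => g ∘ Fin.rev) (h1.symm.trans h2)
          simpa [comp_rev_rev] using h3
        · left
          have h3 := congrArg (fun g => g ∘ Fin.rev) (h1.symm.trans h2)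
          simpa [comp_rev_rev] using h3
      exact hcap (by rw [hD1, hD2, pair_rev_eq b1 b2 hb12])
  · rintro (rfl | rfl)
    · exact ⟨{![0,1,2,3,4], ![0,1,2,3,4] ∘ Fin.rev},
        {![1,0,2,3,4], ![1,0,2,3,4] ∘ Fin.rev},
        isDD_pair _ (by decide), isDD_pair _ (by decide), by decide⟩
    · exact ⟨{![0,1,2,3,4], ![0,1,2,3,4] ∘ Fin.rev},
        {![0,1,2,3,4], ![0,1,2,3,4] ∘ Fin.rev},
        isDD_pair _ (by decide), isDD_pair _ (by decide), by decide⟩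
end

section
/- The collection of ordered 5-tuples obtained by developing the base block (3,5,1,4,9) modulo 11 (i.e., the 11 blocks (3+i, 5+i, 1+i, 4+i, 9+i) mod 11 for i = 0,…,10) forms a 2-(11,5,1) directed design on Z_11. -/
/-- Develop a base block modulo 11. -/
def develop11 (b : Fin 5 → Fin 11) : Finset (Fin 5 → Fin 11) :=
  Finset.univ.image (fun i : Fin 11 => fun j => b j + i)

theorem develop_base_block_is_DD11 : IsDD 11 (develop11 ![3, 5, 1, 4, 9]) := by
  have hinj : Function.Injective (fun i : Fin 11 => (fun j => ![3,5,1,4,9] j + i : Fin 5 → Fin 11)) := by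
    intro a b h
    have := congrFun h 0
    simpa using this
  constructor
  · intro b hb
    simp only [develop11, Finset.mem_image, Finset.mem_univ, true_and] at hb
    obtain ⟨i, rfl⟩ := hb
    intro a c h
    have hbase : Function.Injective (![3,5,1,4,9] : Fin 5 → Fin 11) := by decide
    exact hbase (by simpa using add_right_cancel h)
  · intro x y hxy
    rw [develop11, Finset.filter_image, Finset.card_image_of_injective _ hinj]
    revert hxy
    revert x y
    decide
end

section
/- The collection of ordered 5-tuples obtained by developing the two base blocks (0,1,6,8,18) and (1,0,16,14,4) modulo 21 forms a 2-(21,5,1) directed design on Z_21 with 42 blocks. -/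
/-- Develop a base block modulo 21. -/
def develop21 (b : Fin 5 → Fin 21) : Finset (Fin 5 → Fin 21) :=
  Finset.univ.image (fun i : Fin 21 => fun j => b j + i)

lemma coversPair_shift (b : Fin 5 → Fin 21) (i x y : Fin 21) :
    coversPair (fun j => b j + i) x y ↔ coversPair (fun j => b j + (i - x)) 0 (y - x) := by
  constructor
  · rintro ⟨k, l, hkl, hk, hl⟩
    simp only at hk hl
    exact ⟨k, l, hkl, by simp only; rw [← add_sub_assoc, hk, sub_self],
      by simp only; rw [← add_sub_assoc, hl]⟩
  · rintro ⟨k, l, hkl, hk, hl⟩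
    simp only at hk hl
    refine ⟨k, l, hkl, ?_, ?_⟩
    · have h1 : b k + i - x = 0 := by rw [add_sub_assoc]; exact hk
      have h2 := congrArg (· + x) h1
      simpa [sub_add_cancel] using h2
    · have h1 : b l + i - x = y - x := by rw [add_sub_assoc]; exact hl
      have h2 := congrArg (· + x) h1
      simpa [sub_add_cancel] using h2

lemma shift_count (b : Fin 5 → Fin 21) (x y : Fin 21) :
    (Finset.univ.filter fun i : Fin 21 => coversPair (fun j => b j + i) x y).card =
    (Finset.univ.filter fun i : Fin 21 => coversPair (fun j => b j + i) 0 (y - x)).card := by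
  apply Finset.card_bij' (fun i _ => i - x) (fun i _ => i + x)
  · intro i hi
    simp only [Finset.mem_filter, Finset.mem_univ, true_and] at hi ⊢
    exact (coversPair_shift b i x y).mp hi
  · intro i hi
    simp only [Finset.mem_filter, Finset.mem_univ, true_and] at hi ⊢
    have := (coversPair_shift b (i + x) x y).mpr (by simpa using hi)
    exact this
  · intro i _; simp
  · intro i _; simp

set_option maxRecDepth 100000 in
set_option maxHeartbeats 8000000 in
lemma key20 : ∀ d : Fin 21, d ≠ 0 →
    ((Finset.univ.filter fun i : Fin 21 => coversPair (fun j => ![0,1,6,8,18] j + i) 0 d).card +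
     (Finset.univ.filter fun i : Fin 21 => coversPair (fun j => ![1,0,16,14,4] j + i) 0 d).card) = 1 := by
  decide

lemma base_inj_A : Function.Injective (![0,1,6,8,18] : Fin 5 → Fin 21) := by decide
lemma base_inj_B : Function.Injective (![1,0,16,14,4] : Fin 5 → Fin 21) := by decide

lemma dev_param_inj (b : Fin 5 → Fin 21) :
    Function.Injective (fun i : Fin 21 => fun j => b j + i) := by
  intro i i' h
  have := congrFun h 0
  exact add_left_cancel this

lemma dev_disjoint : Disjoint (develop21 ![0, 1, 6, 8, 18]) (develop21 ![1, 0, 16, 14, 4]) := by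
  rw [Finset.disjoint_left]
  intro c hc hc'
  simp only [develop21, Finset.mem_image, Finset.mem_univ, true_and] at hc hc'
  obtain ⟨i, hi⟩ := hc
  obtain ⟨i', hi'⟩ := hc'
  have h0 : (0 : Fin 21) + i = 1 + i' := by
    have := congrFun (hi.trans hi'.symm) 0; simpa using this
  have h1 : (1 : Fin 21) + i = 0 + i' := by
    have := congrFun (hi.trans hi'.symm) 1; simpa using this
  rw [zero_add] at h0 h1
  rw [h0, ← add_assoc] at h1
  have h2 : (1 + 1 : Fin 21) + i' = 0 + i' := by rw [zero_add]; exact h1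
  exact absurd (add_right_cancel h2) (by decide)

lemma filter_dev_card (b : Fin 5 → Fin 21) (x y : Fin 21) :
    ((develop21 b).filter fun c => coversPair c x y).card =
    (Finset.univ.filter fun i : Fin 21 => coversPair (fun j => b j + i) x y).card := by
  unfold develop21
  rw [Finset.filter_image]
  exact Finset.card_image_of_injective _ (dev_param_inj b)

theorem develop_two_base_blocks_is_DD21 :
    IsDD 21 (develop21 ![0, 1, 6, 8, 18] ∪ develop21 ![1, 0, 16, 14, 4]) ∧
    (develop21 ![0, 1, 6, 8, 18] ∪ develop21 ![1, 0, 16, 14, 4]).card = 42 := by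
  refine ⟨⟨?_, ?_⟩, ?_⟩
  · intro c hc
    rw [Finset.mem_union] at hc
    rcases hc with hc | hc <;>
      · simp only [develop21, Finset.mem_image, Finset.mem_univ, true_and] at hc
        obtain ⟨i, hi⟩ := hc
        subst hi
        intro j j' h
        first
        | exact base_inj_A (add_right_cancel h)
        | exact base_inj_B (add_right_cancel h)
  · intro x y hxy
    rw [Finset.filter_union,
      Finset.card_union_of_disjoint
        (dev_disjoint.mono (Finset.filter_subset _ _) (Finset.filter_subset _ _)),
      filter_dev_card, filter_dev_card, shift_count ![1, 0, 16, 14, 4] x y,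
      shift_count ![0, 1, 6, 8, 18] x y]
    exact key20 (y - x) (sub_ne_zero.mpr hxy.symm)
  · rw [Finset.card_union_of_disjoint dev_disjoint]
    unfold develop21
    rw [Finset.card_image_of_injective _ (dev_param_inj _),
      Finset.card_image_of_injective _ (dev_param_inj _)]
    simp
end

section
/- Two distinct 2-(v,5,1) directed designs on the same point set can never have exactly b_v − 1 common blocks, where b_v = v(v−1)/10 is the number of blocks; hence I_D(v) ⊆ J_D(v) = {0,1,...,b_v−2, b_v}. -/
/-- J_D for a design with b blocks: all values 0,…,b−2 together with b. -/
def JDset (b : ℕ) : Set ℕ := {m | m = b ∨ m + 2 ≤ b}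

/-! Counting ordered pairs shows that every design on `v` points has exactly `v(v-1)/10` blocks.
If two designs shared all but one block `I`, then in each design the remaining block covers
precisely the ordered pairs left uncovered by `I`, so the two remaining blocks cover the same
pairs. An injective 5-tuple is determined by the pairs it covers: the reindexing matching one
tuple to the other is a strictly monotone self-map of `Fin 5`, hence the identity. -/

open Finset

variable {n : ℕ}

lemma eq_of_coversPair_iff {b₁ b₂ : Fin 5 → Fin n} (h₁ : Function.Injective b₁)
    (h₂ : Function.Injective b₂) (hc : ∀ x y, x ≠ y → (coversPair b₁ x y ↔ coversPair b₂ x y)) :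
    b₁ = b₂ := by
  have covers : ∀ {i j}, i < j → coversPair b₂ (b₁ i) (b₁ j) := fun hij =>
    (hc _ _ (h₁.ne hij.ne)).1 ⟨_, _, hij, rfl, rfl⟩
  have mem_range : ∀ i, ∃ k, b₂ k = b₁ i := by
    intro i
    obtain ⟨j, hji⟩ := exists_ne i
    rcases hji.lt_or_gt with hlt | hgt
    · obtain ⟨_, k, _, _, hk⟩ := covers hlt
      exact ⟨k, hk⟩
    · obtain ⟨k, _, _, hk, _⟩ := covers hgt
      exact ⟨k, hk⟩
  choose f hf using mem_range
  have hmono : StrictMono f := fun i j hij => by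
    obtain ⟨p, q, hpq, hp, hq⟩ := covers hij
    rwa [← h₂ (hp.trans (hf i).symm), ← h₂ (hq.trans (hf j).symm)]
  funext i
  rw [← hf i, hmono.apply_eq]

lemma card_filter_coversPair_offDiag {b : Fin 5 → Fin n} (hb : Function.Injective b) :
    #((univ : Finset (Fin n)).offDiag.filter fun p => coversPair b p.1 p.2) = 10 := by
  have himage : ((univ : Finset (Fin 5 × Fin 5)).filter fun q => q.1 < q.2).image
      (Prod.map b b) = (univ : Finset (Fin n)).offDiag.filter fun p => coversPair b p.1 p.2 := by
    ext ⟨x, y⟩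
    simp only [mem_image, mem_filter, mem_offDiag, mem_univ, true_and, Prod.exists,
      Prod.map_apply, Prod.mk.injEq]
    constructor
    · rintro ⟨i, j, hij, rfl, rfl⟩
      exact ⟨hb.ne hij.ne, i, j, hij, rfl, rfl⟩
    · rintro ⟨-, i, j, hij, hi, hj⟩
      exact ⟨i, j, hij, hi, hj⟩
  rw [← himage, card_image_of_injective _ (hb.prodMap hb)]
  decide

namespace IsDD

variable {D C : Finset (Fin 5 → Fin n)}

lemma card_mul_ten (hD : IsDD n D) : #D * 10 = n * (n - 1) := by
  have hcount := card_mul_eq_card_mul (s := D) (t := (univ : Finset (Fin n)).offDiag)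
    (fun (b : Fin 5 → Fin n) (p : Fin n × Fin n) => coversPair b p.1 p.2) (m := 10) (n := 1)
    (fun b hb => card_filter_coversPair_offDiag (hD.1 b hb))
    (fun p hp => hD.2 p.1 p.2 (mem_offDiag.1 hp).2.2)
  rw [hcount, mul_one, offDiag_card, card_univ, Fintype.card_fin, Nat.mul_sub_one]

lemma card_eq (hD : IsDD n D) : #D = n * (n - 1) / 10 := by
  have := hD.card_mul_ten
  omega

lemma coversPair_iff_of_insert {b : Fin 5 → Fin n} (hD : IsDD n (insert b C)) (hb : b ∉ C)
    {x y : Fin n} (hxy : x ≠ y) : coversPair b x y ↔ ∀ c ∈ C, ¬ coversPair c x y := by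
  have hone := hD.2 x y hxy
  rw [filter_insert] at hone
  split_ifs at hone with hcov
  · rw [card_insert_of_notMem fun h => hb (mem_filter.1 h).1, add_eq_right, card_eq_zero,
      filter_eq_empty_iff] at hone
    exact iff_of_true hcov hone
  · obtain ⟨c, hc⟩ := card_pos.1 (hone ▸ Nat.one_pos)
    exact iff_of_false hcov fun h => h c (mem_filter.1 hc).1 (mem_filter.1 hc).2

lemma eq_of_insert {b₁ b₂ : Fin 5 → Fin n} (h₁ : IsDD n (insert b₁ C))
    (h₂ : IsDD n (insert b₂ C)) (hb₁ : b₁ ∉ C) (hb₂ : b₂ ∉ C) : b₁ = b₂ :=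
  eq_of_coversPair_iff (h₁.1 b₁ (mem_insert_self _ _)) (h₂.1 b₂ (mem_insert_self _ _))
    fun _ _ hxy => (h₁.coversPair_iff_of_insert hb₁ hxy).trans
      (h₂.coversPair_iff_of_insert hb₂ hxy).symm

end IsDD

lemma Finset.card_inter_lt_of_card_eq_of_ne {α : Type*} [DecidableEq α] {s t : Finset α}
    (hst : #s = #t) (hne : s ≠ t) : #(s ∩ t) < #s := by
  refine (card_le_card inter_subset_left).lt_of_ne fun h => hne ?_
  rw [← eq_of_subset_of_card_le inter_subset_left h.ge,
    eq_of_subset_of_card_le inter_subset_right (hst ▸ h).ge]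

lemma IsDD.card_inter_ne_sub_one {D₁ D₂ : Finset (Fin 5 → Fin n)} (h₁ : IsDD n D₁)
    (h₂ : IsDD n D₂) (hne : D₁ ≠ D₂) : #(D₁ ∩ D₂) ≠ n * (n - 1) / 10 - 1 := by
  intro hcard
  have hlt := card_inter_lt_of_card_eq_of_ne (h₁.card_eq.trans h₂.card_eq.symm) hne
  rw [h₁.card_eq] at hlt
  obtain ⟨b₁, hb₁, e₁⟩ := exists_eq_insert_iff.2
    ⟨inter_subset_left (s₁ := D₁) (s₂ := D₂), by rw [h₁.card_eq]; omega⟩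
  obtain ⟨b₂, hb₂, e₂⟩ := exists_eq_insert_iff.2
    ⟨inter_subset_right (s₁ := D₁) (s₂ := D₂), by rw [h₂.card_eq]; omega⟩
  rw [← e₁] at h₁
  rw [← e₂] at h₂
  rw [h₁.eq_of_insert h₂ hb₁ hb₂] at e₁
  exact hne (e₁.symm.trans e₂)

theorem intersection_never_b_sub_one (v : ℕ) :
    (∀ D1 D2 : Finset (Fin 5 → Fin v), IsDD v D1 → IsDD v D2 → D1 ≠ D2 →
        (D1 ∩ D2).card ≠ v * (v - 1) / 10 - 1) ∧
    IDset v ⊆ JDset (v * (v - 1) / 10) := by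
  refine ⟨fun D1 D2 h1 h2 hne => h1.card_inter_ne_sub_one h2 hne, ?_⟩
  rintro m ⟨D1, D2, h1, h2, rfl⟩
  by_cases heq : D1 = D2
  · left
    rw [heq, inter_self, h2.card_eq]
  · right
    have hlt := card_inter_lt_of_card_eq_of_ne (h1.card_eq.trans h2.card_eq.symm) heq
    have hne := h1.card_inter_ne_sub_one h2 heq
    rw [h1.card_eq] at hlt
    omega
end

section
/- The 8 ordered 5-tuples (7,9,6,4,2), (2,3,6,9,8), (5,4,8,1,9), (2,4,7,0,5), (6,0,7,3,1), (8,5,3,0,2), (1,0,8,4,6), (9,1,3,5,7) form a directed group divisible design of type 2^5 with groups {1,2}, {3,4}, {5,6}, {7,8}, {0,9}: every ordered pair of distinct elements lying in different groups appears in exactly one block, and no block contains two elements of the same group. -/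
/-- Two points lie in a common group. -/
def sameGroup {n : ℕ} (groups : Finset (Finset (Fin n))) (x y : Fin n) : Prop :=
  ∃ g ∈ groups, x ∈ g ∧ y ∈ g

instance {n : ℕ} (groups : Finset (Finset (Fin n))) (x y : Fin n) :
    Decidable (sameGroup groups x y) := by
  unfold sameGroup; infer_instance

/-- `groups` partitions the point set. -/
def IsGroupPartition (n : ℕ) (groups : Finset (Finset (Fin n))) : Prop :=
  ∀ x : Fin n, ∃! g, g ∈ groups ∧ x ∈ g

/-- A 5-DGDD: every ordered pair of points from different groups is covered by exactly
one block, and no pair of points from a common group is covered by any block. -/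
def IsDGDD (n : ℕ) (groups : Finset (Finset (Fin n))) (D : Finset (Fin 5 → Fin n)) : Prop :=
  (∀ b ∈ D, Function.Injective b) ∧
  (∀ x y : Fin n, x ≠ y → sameGroup groups x y →
    (D.filter (fun b => coversPair b x y)).card = 0) ∧
  (∀ x y : Fin n, x ≠ y → ¬ sameGroup groups x y →
    (D.filter (fun b => coversPair b x y)).card = 1)

theorem concrete_DGDD_type_2_5 :
    IsDGDD 10 ({{1,2},{3,4},{5,6},{7,8},{0,9}} : Finset (Finset (Fin 10)))
      ({![7,9,6,4,2], ![2,3,6,9,8], ![5,4,8,1,9], ![2,4,7,0,5],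
        ![6,0,7,3,1], ![8,5,3,0,2], ![1,0,8,4,6], ![9,1,3,5,7]} :
        Finset (Fin 5 → Fin 10)) := by
  refine ⟨?_, ?_, ?_⟩
  · intro b hb
    fin_cases hb <;> decide
  · intro x y
    fin_cases x <;> fin_cases y <;> decide
  · intro x y
    fin_cases x <;> fin_cases y <;> decide
end

section
/- The intersection spectrum of 5-DGDDs of type 2^5 with the same groups is I_G(10) = {0,1,2,3,4,5,6,8}; that is, for each m in this set there exist two such directed group divisible designs with the same groups sharing exactly m blocks, and 7 is excluded. -/
set_option maxRecDepth 8000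

/-- The intersection spectrum of 5-DGDDs of type 2^(n/2) with the same groups. -/
def IGset (n : ℕ) : Set ℕ :=
  {m | ∃ (groups : Finset (Finset (Fin n))) (D1 D2 : Finset (Fin 5 → Fin n)),
    IsGroupPartition n groups ∧ (∀ g ∈ groups, g.card = 2) ∧
    IsDGDD n groups D1 ∧ IsDGDD n groups D2 ∧ (D1 ∩ D2).card = m}

/-! ### Reconstruction of a block from the pairs it covers -/

lemma filter_lt_card (i : Fin 5) :
    ((Finset.univ : Finset (Fin 5)).filter (fun j => j < i)).card = i.val := by
  revert i; decide

lemma indeg_card {n : ℕ} {b : Fin 5 → Fin n} (hb : Function.Injective b) (i : Fin 5) :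
    ((Finset.univ : Finset (Fin n)).filter (fun y => coversPair b y (b i))).card = i.val := by
  have him : (Finset.univ.filter (fun y => coversPair b y (b i))) =
      ((Finset.univ : Finset (Fin 5)).filter (fun j => j < i)).image b := by
    ext y
    simp only [Finset.mem_filter, Finset.mem_univ, true_and, Finset.mem_image]
    constructor
    · rintro ⟨p, q, hpq, hp, hq⟩
      cases hb hq
      exact ⟨p, hpq, hp⟩
    · rintro ⟨j, hj, hjy⟩
      exact ⟨j, i, hj, hjy, rfl⟩
  rw [him, Finset.card_image_of_injective _ hb, filter_lt_card]

lemma covers_ext {n : ℕ} {b1 b2 : Fin 5 → Fin n} (h1 : Function.Injective b1)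
    (h2 : Function.Injective b2)
    (h : ∀ x y, coversPair b1 x y ↔ coversPair b2 x y) : b1 = b2 := by
  funext i
  obtain ⟨j, hj⟩ : ∃ j, b2 j = b1 i := by
    rcases lt_or_ge (i : ℕ) 4 with hi | hi
    · have hcov : coversPair b1 (b1 i) (b1 ⟨(i : ℕ) + 1, by omega⟩) :=
        ⟨i, ⟨(i : ℕ) + 1, by omega⟩, by simp [Fin.lt_def], rfl, rfl⟩
      obtain ⟨p, q, _, hp, _⟩ := (h _ _).1 hcov
      exact ⟨p, hp⟩
    · have h0 : (0 : Fin 5) < i := by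
        have h4 : (i : ℕ) = 4 := le_antisymm (by omega) hi
        simp [Fin.lt_def, h4]
      have hcov : coversPair b1 (b1 0) (b1 i) := ⟨0, i, h0, rfl, rfl⟩
      obtain ⟨p, q, _, _, hq⟩ := (h _ _).1 hcov
      exact ⟨q, hq⟩
  have e1 := indeg_card h1 i
  have e2 := indeg_card h2 j
  rw [hj] at e2
  have hfe : (Finset.univ.filter (fun y => coversPair b1 y (b1 i))) =
      (Finset.univ.filter (fun y => coversPair b2 y (b1 i))) :=
    Finset.filter_congr (fun y _ => by simpa using h y (b1 i))
  rw [hfe, e2] at e1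
  have : j = i := Fin.ext e1
  rw [← hj, this]

/-! ### Every 5-DGDD of type 2^5 has exactly 8 blocks -/

lemma covered_pairs_card {n : ℕ} {b : Fin 5 → Fin n} (hb : Function.Injective b) :
    ((Finset.univ ×ˢ Finset.univ : Finset (Fin n × Fin n)).filter
      (fun p => coversPair b p.1 p.2)).card = 10 := by
  have him : (Finset.univ ×ˢ Finset.univ : Finset (Fin n × Fin n)).filter
        (fun p => coversPair b p.1 p.2)
      = ((Finset.univ ×ˢ Finset.univ : Finset (Fin 5 × Fin 5)).filter
          (fun q => q.1 < q.2)).image (fun q => (b q.1, b q.2)) := by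
    ext p
    simp only [Finset.mem_filter, Finset.mem_image, Finset.mem_product, Finset.mem_univ,
      true_and]
    constructor
    · rintro ⟨i, j, hij, hi, hj⟩
      exact ⟨(i, j), hij, by rw [Prod.ext_iff]; exact ⟨hi, hj⟩⟩
    · rintro ⟨⟨i, j⟩, hij, hp⟩
      exact ⟨i, j, hij, congrArg Prod.fst hp, congrArg Prod.snd hp⟩
  rw [him, Finset.card_image_of_injective]
  · decide
  · intro q r hqr
    exact Prod.ext (hb (congrArg Prod.fst hqr)) (hb (congrArg Prod.snd hqr))

lemma DGDD_card {G : Finset (Finset (Fin 10))} {D : Finset (Fin 5 → Fin 10)}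
    (hGP : IsGroupPartition 10 G) (hg2 : ∀ g ∈ G, g.card = 2) (hD : IsDGDD 10 G D) :
    D.card = 8 := by
  have key : ∑ p ∈ (Finset.univ ×ˢ Finset.univ : Finset (Fin 10 × Fin 10)),
      (D.filter (fun b => coversPair b p.1 p.2)).card = 10 * D.card := by
    calc ∑ p ∈ (Finset.univ ×ˢ Finset.univ : Finset (Fin 10 × Fin 10)),
          (D.filter (fun b => coversPair b p.1 p.2)).card
        = ∑ p ∈ (Finset.univ ×ˢ Finset.univ : Finset (Fin 10 × Fin 10)),
            ∑ b ∈ D, (if coversPair b p.1 p.2 then 1 else 0) :=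
          Finset.sum_congr rfl fun p _ => Finset.card_filter _ _
      _ = ∑ b ∈ D, ∑ p ∈ (Finset.univ ×ˢ Finset.univ : Finset (Fin 10 × Fin 10)),
            (if coversPair b p.1 p.2 then 1 else 0) := Finset.sum_comm
      _ = ∑ _b ∈ D, 10 := Finset.sum_congr rfl fun b hb => by
            rw [← Finset.card_filter]; exact covered_pairs_card (hD.1 b hb)
      _ = 10 * D.card := by rw [Finset.sum_const, smul_eq_mul, mul_comm]
  have key2 : ∑ p ∈ (Finset.univ ×ˢ Finset.univ : Finset (Fin 10 × Fin 10)),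
      (D.filter (fun b => coversPair b p.1 p.2)).card = 80 := by
    have hterm : ∀ p : Fin 10 × Fin 10, (D.filter (fun b => coversPair b p.1 p.2)).card
        = if p.1 ≠ p.2 ∧ ¬ sameGroup G p.1 p.2 then 1 else 0 := by
      rintro ⟨x, y⟩
      by_cases hxy : x = y
      · subst hxy
        rw [if_neg (fun h => h.1 rfl)]
        rw [Finset.card_eq_zero]
        rw [Finset.filter_eq_empty_iff]
        rintro b hb ⟨i, j, hij, hi, hjq⟩
        exact absurd (hD.1 b hb (hi.trans hjq.symm)) hij.ne
      · by_cases hsg : sameGroup G x y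
        · rw [if_neg (fun h => h.2 hsg)]
          exact hD.2.1 x y hxy hsg
        · rw [if_pos ⟨hxy, hsg⟩]
          exact hD.2.2 x y hxy hsg
    have inner : ∀ x : Fin 10,
        (∑ y : Fin 10, if x ≠ y ∧ ¬ sameGroup G x y then 1 else 0) = 8 := by
      intro x
      obtain ⟨g, ⟨hgG, hxg⟩, huniq⟩ := hGP x
      have hset : (Finset.univ.filter (fun y => x ≠ y ∧ ¬ sameGroup G x y)) =
          Finset.univ \ g := by
        ext y
        simp only [Finset.mem_filter, Finset.mem_univ, true_and, Finset.mem_sdiff]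
        constructor
        · rintro ⟨hne, hns⟩
          exact fun hyg => hns ⟨g, hgG, hxg, hyg⟩
        · intro hyg
          refine ⟨?_, ?_⟩
          · rintro rfl; exact hyg hxg
          · rintro ⟨g', hg', hxg', hyg'⟩
            exact hyg ((huniq g' ⟨hg', hxg'⟩) ▸ hyg')
      rw [← Finset.card_filter, hset, Finset.card_sdiff_of_subset (Finset.subset_univ g),
        Finset.card_univ, hg2 g hgG]
      simp
    calc ∑ p ∈ (Finset.univ ×ˢ Finset.univ : Finset (Fin 10 × Fin 10)),
          (D.filter (fun b => coversPair b p.1 p.2)).card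
        = ∑ p ∈ (Finset.univ ×ˢ Finset.univ : Finset (Fin 10 × Fin 10)),
            (if p.1 ≠ p.2 ∧ ¬ sameGroup G p.1 p.2 then 1 else 0) :=
          Finset.sum_congr rfl fun p _ => hterm p
      _ = ∑ x : Fin 10, ∑ y : Fin 10, (if x ≠ y ∧ ¬ sameGroup G x y then 1 else 0) :=
          by rw [Finset.sum_product]
      _ = ∑ _x : Fin 10, 8 := Finset.sum_congr rfl fun x _ => inner x
      _ = 80 := by simp
  omega

/-! ### If two DGDDs differ in exactly one block, they are equal -/

lemma swap_block {G : Finset (Finset (Fin 10))} {D1 D2 : Finset (Fin 5 → Fin 10)}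
    (h1 : IsDGDD 10 G D1) (h2 : IsDGDD 10 G D2) {b1 b2 : Fin 5 → Fin 10}
    (hb1 : D1 \ D2 = {b1}) (hb2 : D2 \ D1 = {b2}) :
    ∀ x y, coversPair b1 x y → coversPair b2 x y := by
  have hb1m : b1 ∈ D1 ∧ b1 ∉ D2 :=
    Finset.mem_sdiff.1 (hb1 ▸ Finset.mem_singleton_self b1)
  intro x y hc
  have hxy : x ≠ y := by
    rintro rfl
    obtain ⟨i, j, hij, hi, hjq⟩ := hc
    exact absurd (h1.1 b1 hb1m.1 (hi.trans hjq.symm)) hij.ne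
  have hsg : ¬ sameGroup G x y := by
    intro hs
    have h0 := h1.2.1 x y hxy hs
    have hmem : b1 ∈ D1.filter (fun b => coversPair b x y) :=
      Finset.mem_filter.2 ⟨hb1m.1, hc⟩
    rw [Finset.card_eq_zero.1 h0] at hmem
    exact absurd hmem (Finset.notMem_empty b1)
  obtain ⟨c, hceq⟩ := Finset.card_eq_one.1 (h2.2.2 x y hxy hsg)
  have hcD2 : c ∈ D2 ∧ coversPair c x y :=
    Finset.mem_filter.1 (hceq ▸ Finset.mem_singleton_self c)
  have hcD1 : c ∉ D1 := by
    intro hcd1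
    obtain ⟨c', hceq'⟩ := Finset.card_eq_one.1 (h1.2.2 x y hxy hsg)
    have h1c : c = c' := Finset.mem_singleton.1
      (hceq' ▸ Finset.mem_filter.2 ⟨hcd1, hcD2.2⟩)
    have h1b : b1 = c' := Finset.mem_singleton.1
      (hceq' ▸ Finset.mem_filter.2 ⟨hb1m.1, hc⟩)
    exact hb1m.2 ((h1c.trans h1b.symm) ▸ hcD2.1)
  have hcb2 : c = b2 := Finset.mem_singleton.1
    (hb2 ▸ Finset.mem_sdiff.2 ⟨hcD2.1, hcD1⟩)
  exact hcb2 ▸ hcD2.2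

/-! ### Concrete designs -/

def G10 : Finset (Finset (Fin 10)) := {{0,5},{1,6},{2,7},{3,8},{4,9}}

def DA : Finset (Fin 5 → Fin 10) :=
  {![0,1,2,3,4], ![1,8,9,0,7], ![3,2,0,9,6], ![4,3,5,7,1],
   ![5,8,4,6,2], ![6,7,4,0,8], ![7,6,5,9,3], ![9,2,8,1,5]}

def DB : Finset (Fin 5 → Fin 10) :=
  {![4,3,2,1,0], ![7,0,9,8,1], ![6,9,0,2,3], ![1,7,5,3,4],
   ![2,6,4,8,5], ![8,0,4,7,6], ![3,9,5,6,7], ![5,1,8,2,9]}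

def E1 : Finset (Fin 5 → Fin 10) :=
  {![0,1,2,3,4], ![1,0,7,8,9], ![3,2,9,0,6], ![4,8,6,7,0],
   ![5,6,9,2,8], ![7,6,5,4,3], ![8,4,2,1,5], ![9,3,5,7,1]}

def E2 : Finset (Fin 5 → Fin 10) :=
  {![0,1,2,3,4], ![1,9,0,7,8], ![3,2,0,9,6], ![4,2,8,1,5],
   ![5,6,4,3,7], ![6,5,8,9,2], ![7,9,3,5,1], ![8,7,4,6,0]}

def E3 : Finset (Fin 5 → Fin 10) :=
  {![0,1,2,3,4], ![1,8,9,0,7], ![3,2,0,9,6], ![4,3,7,1,5],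
   ![6,5,7,9,3], ![7,6,4,0,8], ![8,5,4,6,2], ![9,2,5,8,1]}

def E4 : Finset (Fin 5 → Fin 10) :=
  {![0,1,2,3,4], ![1,8,9,0,7], ![3,2,0,9,6], ![4,3,7,1,5],
   ![5,8,4,6,2], ![6,5,7,9,3], ![7,6,4,0,8], ![9,2,8,5,1]}

def E5 : Finset (Fin 5 → Fin 10) :=
  {![0,1,2,3,4], ![1,8,9,0,7], ![3,2,0,9,6], ![4,3,7,5,1],
   ![5,8,4,6,2], ![6,5,7,9,3], ![7,6,4,0,8], ![9,2,8,1,5]}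

def E6 : Finset (Fin 5 → Fin 10) :=
  {![0,1,2,3,4], ![1,8,9,0,7], ![3,2,0,9,6], ![4,3,5,7,1],
   ![5,8,4,6,2], ![6,7,5,9,3], ![7,6,4,0,8], ![9,2,8,1,5]}

lemma hGP10 : IsGroupPartition 10 G10 := by
  intro x
  fin_cases x
  · exact ⟨{0,5}, by decide, by rintro g ⟨hg, hx⟩; fin_cases hg <;> revert hx <;> decide⟩
  · exact ⟨{1,6}, by decide, by rintro g ⟨hg, hx⟩; fin_cases hg <;> revert hx <;> decide⟩
  · exact ⟨{2,7}, by decide, by rintro g ⟨hg, hx⟩; fin_cases hg <;> revert hx <;> decide⟩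
  · exact ⟨{3,8}, by decide, by rintro g ⟨hg, hx⟩; fin_cases hg <;> revert hx <;> decide⟩
  · exact ⟨{4,9}, by decide, by rintro g ⟨hg, hx⟩; fin_cases hg <;> revert hx <;> decide⟩
  · exact ⟨{0,5}, by decide, by rintro g ⟨hg, hx⟩; fin_cases hg <;> revert hx <;> decide⟩
  · exact ⟨{1,6}, by decide, by rintro g ⟨hg, hx⟩; fin_cases hg <;> revert hx <;> decide⟩
  · exact ⟨{2,7}, by decide, by rintro g ⟨hg, hx⟩; fin_cases hg <;> revert hx <;> decide⟩
  · exact ⟨{3,8}, by decide, by rintro g ⟨hg, hx⟩; fin_cases hg <;> revert hx <;> decide⟩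
  · exact ⟨{4,9}, by decide, by rintro g ⟨hg, hx⟩; fin_cases hg <;> revert hx <;> decide⟩

lemma hg210 : ∀ g ∈ G10, g.card = 2 := by
  intro g hg; fin_cases hg <;> decide

lemma hDA : IsDGDD 10 G10 DA :=
  ⟨by intro b hb; fin_cases hb <;> decide, by decide, by decide⟩

lemma hDB : IsDGDD 10 G10 DB :=
  ⟨by intro b hb; fin_cases hb <;> decide, by decide, by decide⟩

lemma hE1 : IsDGDD 10 G10 E1 :=
  ⟨by intro b hb; fin_cases hb <;> decide, by decide, by decide⟩

lemma hE2 : IsDGDD 10 G10 E2 :=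
  ⟨by intro b hb; fin_cases hb <;> decide, by decide, by decide⟩

lemma hE3 : IsDGDD 10 G10 E3 :=
  ⟨by intro b hb; fin_cases hb <;> decide, by decide, by decide⟩

lemma hE4 : IsDGDD 10 G10 E4 :=
  ⟨by intro b hb; fin_cases hb <;> decide, by decide, by decide⟩

lemma hE5 : IsDGDD 10 G10 E5 :=
  ⟨by intro b hb; fin_cases hb <;> decide, by decide, by decide⟩

lemma hE6 : IsDGDD 10 G10 E6 :=
  ⟨by intro b hb; fin_cases hb <;> decide, by decide, by decide⟩

theorem IGset_ten : IGset 10 = {0, 1, 2, 3, 4, 5, 6, 8} := by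
  ext m
  simp only [IGset, Set.mem_setOf_eq, Set.mem_insert_iff, Set.mem_singleton_iff]
  constructor
  · rintro ⟨G, D1, D2, hGP, hg2, h1, h2, rfl⟩
    have c1 := DGDD_card hGP hg2 h1
    have c2 := DGDD_card hGP hg2 h2
    have hle : (D1 ∩ D2).card ≤ 8 :=
      c1 ▸ Finset.card_le_card Finset.inter_subset_left
    have hne7 : (D1 ∩ D2).card ≠ 7 := by
      intro h7
      have hs1 : (D1 \ D2).card = 1 := by
        have := Finset.card_sdiff_add_card_inter D1 D2; omega
      have hs2 : (D2 \ D1).card = 1 := by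
        have := Finset.card_sdiff_add_card_inter D2 D1
        rw [Finset.inter_comm] at this; omega
      obtain ⟨b1, hb1⟩ := Finset.card_eq_one.1 hs1
      obtain ⟨b2, hb2⟩ := Finset.card_eq_one.1 hs2
      have m1 := Finset.mem_sdiff.1 (hb1 ▸ Finset.mem_singleton_self b1)
      have m2 := Finset.mem_sdiff.1 (hb2 ▸ Finset.mem_singleton_self b2)
      have hne : b1 ≠ b2 := fun h => m1.2 (h ▸ m2.1)
      exact hne (covers_ext (h1.1 b1 m1.1) (h2.1 b2 m2.1)
        (fun x y => ⟨swap_block h1 h2 hb1 hb2 x y, swap_block h2 h1 hb2 hb1 x y⟩))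
    omega
  · rintro (rfl | rfl | rfl | rfl | rfl | rfl | rfl | rfl)
    · exact ⟨G10, DA, DB, hGP10, hg210, hDA, hDB, by decide⟩
    · exact ⟨G10, DA, E1, hGP10, hg210, hDA, hE1, by decide⟩
    · exact ⟨G10, DA, E2, hGP10, hg210, hDA, hE2, by decide⟩
    · exact ⟨G10, DA, E3, hGP10, hg210, hDA, hE3, by decide⟩
    · exact ⟨G10, DA, E4, hGP10, hg210, hDA, hE4, by decide⟩
    · exact ⟨G10, DA, E5, hGP10, hg210, hDA, hE5, by decide⟩
    · exact ⟨G10, DA, E6, hGP10, hg210, hDA, hE6, by decide⟩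
    · exact ⟨G10, DA, DA, hGP10, hg210, hDA, hDA, by decide⟩
end

section
/- Construction of directed designs from GDDs: if there exists a group divisible design of order v with block sizes in {5,6} whose group sizes are all congruent to 0 or 2 mod 5, and if for each group size g a 2-(2g+1,5,1) directed design exists, then there exists a 2-(2v+1,5,1) directed design. -/
set_option maxRecDepth 40000


/-- A group divisible design with block sizes in {5,6}: every pair of distinct points
lies in exactly one block or one group but not both. -/
def IsGDD (n : ℕ) (groups : Finset (Finset (Fin n))) (B : Finset (Finset (Fin n))) : Prop :=
  IsGroupPartition n groups ∧
  (∀ b ∈ B, b.card = 5 ∨ b.card = 6) ∧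
  (∀ x y : Fin n, x ≠ y → sameGroup groups x y →
    (B.filter (fun b => x ∈ b ∧ y ∈ b)).card = 0) ∧
  (∀ x y : Fin n, x ≠ y → ¬ sameGroup groups x y →
    (B.filter (fun b => x ∈ b ∧ y ∈ b)).card = 1)

/-- Embedding of the doubled points of a `c`-subset into `Fin (2v+1)`. -/
def emb (v c : ℕ) (σ : Fin c → Fin v) (k : Fin (2*c)) : Fin (2*v+1) :=
  if h : (k : ℕ) < c then
    ⟨(σ ⟨k, h⟩ : ℕ), by have := (σ ⟨k, h⟩).isLt; omega⟩
  else
    ⟨(σ ⟨(k : ℕ) - c, by have := k.isLt; omega⟩ : ℕ) + v, by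
      have := (σ ⟨(k : ℕ) - c, by have := k.isLt; omega⟩).isLt; omega⟩

/-- Embedding of the doubled points of a `c`-subset plus the point at infinity. -/
def embG (v c : ℕ) (σ : Fin c → Fin v) (k : Fin (2*c+1)) : Fin (2*v+1) :=
  if h : (k : ℕ) < c then
    ⟨(σ ⟨k, h⟩ : ℕ), by have := (σ ⟨k, h⟩).isLt; omega⟩
  else if h2 : (k : ℕ) < 2*c then
    ⟨(σ ⟨(k : ℕ) - c, by omega⟩ : ℕ) + v, by
      have := (σ ⟨(k : ℕ) - c, by omega⟩).isLt; omega⟩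
  else ⟨2*v, by omega⟩

lemma emb_cases (v c : ℕ) (σ : Fin c → Fin v) (k : Fin (2*c)) :
    ∃ i : Fin c, (k : ℕ) % c = i ∧
      (((k : ℕ) = i ∧ (emb v c σ k : ℕ) = σ i) ∨
       ((k : ℕ) = i + c ∧ (emb v c σ k : ℕ) = (σ i : ℕ) + v)) := by
  unfold emb
  split_ifs with h
  · exact ⟨⟨k, h⟩, Nat.mod_eq_of_lt h, Or.inl ⟨rfl, rfl⟩⟩
  · have hk := k.isLt
    refine ⟨⟨(k : ℕ) - c, by omega⟩, ?_, Or.inr ⟨by simp; omega, rfl⟩⟩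
    have h1 : c ≤ (k : ℕ) := by omega
    rw [Nat.mod_eq_sub_mod h1]
    exact Nat.mod_eq_of_lt (by omega)

lemma emb_lt (v c : ℕ) (σ : Fin c → Fin v) (k : Fin (2*c)) : (emb v c σ k : ℕ) < 2*v := by
  obtain ⟨i, _, hiv⟩ := emb_cases v c σ k
  have := (σ i).isLt
  rcases hiv with ⟨_, hv⟩ | ⟨_, hv⟩ <;> omega

lemma emb_inj (v c : ℕ) (σ : Fin c → Fin v) (hσ : Function.Injective σ) :
    Function.Injective (emb v c σ) := by
  intro k l h
  obtain ⟨i, hi, hiv⟩ := emb_cases v c σ k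
  obtain ⟨j, hj, hjv⟩ := emb_cases v c σ l
  have hvv : (emb v c σ k : ℕ) = (emb v c σ l : ℕ) := by rw [h]
  have hij : i = j := by
    have h3 := (σ i).isLt; have h4 := (σ j).isLt
    rcases hiv with ⟨_, h5⟩ | ⟨_, h5⟩ <;> rcases hjv with ⟨_, h6⟩ | ⟨_, h6⟩ <;>
      exact hσ (Fin.ext (by omega))
  subst hij
  have h3 := (σ i).isLt
  apply Fin.ext
  rcases hiv with ⟨h5, h5'⟩ | ⟨h5, h5'⟩ <;> rcases hjv with ⟨h6, h6'⟩ | ⟨h6, h6'⟩ <;> omega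

lemma emb_exists (v c : ℕ) (σ : Fin c → Fin v) (p : Fin (2*v+1)) (i : Fin c)
    (hp : (p : ℕ) = σ i ∨ (p : ℕ) = (σ i : ℕ) + v) :
    ∃ k : Fin (2*c), emb v c σ k = p ∧ (k : ℕ) % c = i := by
  rcases hp with hp | hp
  · refine ⟨⟨i, by have := i.isLt; omega⟩, ?_, ?_⟩
    · obtain ⟨i', hi', hiv⟩ := emb_cases v c σ ⟨i, by have := i.isLt; omega⟩
      have hii : i' = i := by
        apply Fin.ext
        have := i.isLt
        rcases hiv with ⟨h5, _⟩ | ⟨h5, _⟩ <;> simp at h5 <;> omega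
      subst hii
      apply Fin.ext
      have := (σ i').isLt
      rcases hiv with ⟨_, h5⟩ | ⟨h5, _⟩
      · simp only [h5]; omega
      · simp at h5; have := i'.isLt; omega
    · simp [Nat.mod_eq_of_lt i.isLt]
  · refine ⟨⟨(i : ℕ) + c, by have := i.isLt; omega⟩, ?_, ?_⟩
    · obtain ⟨i', hi', hiv⟩ := emb_cases v c σ ⟨(i : ℕ) + c, by have := i.isLt; omega⟩
      have hii : i' = i := by
        apply Fin.ext
        have := i.isLt; have := i'.isLt
        rcases hiv with ⟨h5, _⟩ | ⟨h5, _⟩ <;> simp at h5 <;> omega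
      subst hii
      apply Fin.ext
      have := (σ i').isLt; have := i'.isLt
      rcases hiv with ⟨h5, _⟩ | ⟨_, h5⟩
      · simp at h5; omega
      · simp only [h5]; omega
    · simp [Nat.add_mod_right, Nat.mod_eq_of_lt i.isLt]

lemma embG_cases (v c : ℕ) (σ : Fin c → Fin v) (k : Fin (2*c+1)) :
    ((k : ℕ) = 2*c ∧ (embG v c σ k : ℕ) = 2*v) ∨
    ∃ i : Fin c,
      (((k : ℕ) = i ∧ (embG v c σ k : ℕ) = σ i) ∨
       ((k : ℕ) = i + c ∧ (embG v c σ k : ℕ) = (σ i : ℕ) + v)) := by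
  unfold embG
  split_ifs with h h2
  · exact Or.inr ⟨⟨k, h⟩, Or.inl ⟨rfl, rfl⟩⟩
  · exact Or.inr ⟨⟨(k : ℕ) - c, by omega⟩, Or.inr ⟨by simp; omega, rfl⟩⟩
  · have := k.isLt; exact Or.inl ⟨by omega, rfl⟩

lemma embG_inj (v c : ℕ) (σ : Fin c → Fin v) (hσ : Function.Injective σ) :
    Function.Injective (embG v c σ) := by
  intro k l h
  have hvv : (embG v c σ k : ℕ) = (embG v c σ l : ℕ) := by rw [h]
  rcases embG_cases v c σ k with ⟨hk, hkv⟩ | ⟨i, hiv⟩ <;>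
    rcases embG_cases v c σ l with ⟨hl, hlv⟩ | ⟨j, hjv⟩
  · exact Fin.ext (by omega)
  · exfalso; have := (σ j).isLt
    rcases hjv with ⟨_, h6⟩ | ⟨_, h6⟩ <;> omega
  · exfalso; have := (σ i).isLt
    rcases hiv with ⟨_, h6⟩ | ⟨_, h6⟩ <;> omega
  · have hij : i = j := by
      have h3 := (σ i).isLt; have h4 := (σ j).isLt
      rcases hiv with ⟨_, h5⟩ | ⟨_, h5⟩ <;> rcases hjv with ⟨_, h6⟩ | ⟨_, h6⟩ <;>
        exact hσ (Fin.ext (by omega))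
    subst hij
    have h3 := (σ i).isLt
    apply Fin.ext
    rcases hiv with ⟨h5, h5'⟩ | ⟨h5, h5'⟩ <;> rcases hjv with ⟨h6, h6'⟩ | ⟨h6, h6'⟩ <;> omega

lemma embG_last (v c : ℕ) (σ : Fin c → Fin v) :
    embG v c σ ⟨2*c, by omega⟩ = ⟨2*v, by omega⟩ := by
  unfold embG
  split_ifs with h h2
  · exact absurd h (by simp only [Fin.val_mk]; omega)
  · exact absurd h2 (by simp only [Fin.val_mk]; omega)
  · rfl

lemma embG_exists (v c : ℕ) (σ : Fin c → Fin v) (p : Fin (2*v+1)) (i : Fin c)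
    (hp : (p : ℕ) = σ i ∨ (p : ℕ) = (σ i : ℕ) + v) :
    ∃ k : Fin (2*c+1), embG v c σ k = p := by
  rcases hp with hp | hp
  · refine ⟨⟨i, by have := i.isLt; omega⟩, ?_⟩
    rcases embG_cases v c σ ⟨i, by have := i.isLt; omega⟩ with ⟨h1, _⟩ | ⟨i', hiv⟩
    · exfalso; have := i.isLt; simp at h1; omega
    · have hii : i' = i := by
        apply Fin.ext
        have := i.isLt; have := i'.isLt
        rcases hiv with ⟨h5, _⟩ | ⟨h5, _⟩ <;> simp at h5 <;> omega
      subst hii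
      apply Fin.ext
      have := (σ i').isLt; have := i'.isLt
      rcases hiv with ⟨_, h5⟩ | ⟨h5, _⟩
      · simp only [h5]; omega
      · simp at h5; omega
  · refine ⟨⟨(i : ℕ) + c, by have := i.isLt; omega⟩, ?_⟩
    rcases embG_cases v c σ ⟨(i : ℕ) + c, by have := i.isLt; omega⟩ with ⟨h1, _⟩ | ⟨i', hiv⟩
    · exfalso; have := i.isLt; simp at h1; omega
    · have hii : i' = i := by
        apply Fin.ext
        have := i.isLt; have := i'.isLt
        rcases hiv with ⟨h5, _⟩ | ⟨h5, _⟩ <;> simp at h5 <;> omega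
      subst hii
      apply Fin.ext
      have := (σ i').isLt; have := i'.isLt
      rcases hiv with ⟨h5, _⟩ | ⟨_, h5⟩
      · simp at h5; omega
      · simp only [h5]; omega

lemma filter_image_card {m N : ℕ} (e : Fin m → Fin N) (he : Function.Injective e)
    (D : Finset (Fin 5 → Fin m)) (k l : Fin m) :
    ((D.image (fun t => e ∘ t)).filter (fun t => coversPair t (e k) (e l))).card
      = (D.filter (fun t => coversPair t k l)).card := by
  have hinj : Function.Injective (fun t : Fin 5 → Fin m => e ∘ t) :=
    fun t t' h => funext fun i => he (congrFun h i)
  rw [Finset.filter_image, Finset.card_image_of_injective _ hinj]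
  congr 1
  apply Finset.filter_congr
  intro t _
  constructor
  · rintro ⟨i, j, hij, hi, hj⟩
    exact ⟨i, j, hij, he hi, he hj⟩
  · rintro ⟨i, j, hij, hi, hj⟩
    exact ⟨i, j, hij, by rw [Function.comp_apply, hi], by rw [Function.comp_apply, hj]⟩

lemma filter_image_empty {m N : ℕ} (e : Fin m → Fin N)
    (D : Finset (Fin 5 → Fin m)) (p q : Fin N)
    (h : (∀ k, e k ≠ p) ∨ (∀ k, e k ≠ q)) :
    (D.image (fun t => e ∘ t)).filter (fun t => coversPair t p q) = ∅ := by
  rw [Finset.filter_eq_empty_iff]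
  intro t ht hc
  obtain ⟨t', _, rfl⟩ := Finset.mem_image.mp ht
  obtain ⟨i, j, hij, hi, hj⟩ := hc
  rcases h with h | h
  · exact h (t' i) hi
  · exact h (t' j) hj

lemma filter_biUnion_empty {α β : Type*} [DecidableEq α] [DecidableEq β] (s : Finset α)
    (F : α → Finset β) (P : β → Prop) [DecidablePred P]
    (h : ∀ a ∈ s, (F a).filter P = ∅) :
    (s.biUnion F).filter P = ∅ := by
  rw [Finset.filter_eq_empty_iff]
  intro t ht hP
  obtain ⟨a, ha, hta⟩ := Finset.mem_biUnion.mp ht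
  have h2 := h a ha
  rw [Finset.filter_eq_empty_iff] at h2
  exact h2 hta hP

lemma filter_biUnion_one {α β : Type*} [DecidableEq α] [DecidableEq β] (s : Finset α)
    (F : α → Finset β) (P : β → Prop) [DecidablePred P] (a0 : α) (h0 : a0 ∈ s)
    (h1 : ((F a0).filter P).card = 1)
    (h : ∀ a ∈ s, a ≠ a0 → (F a).filter P = ∅) :
    ((s.biUnion F).filter P).card = 1 := by
  have key : (s.biUnion F).filter P = (F a0).filter P := by
    ext t
    simp only [Finset.mem_filter, Finset.mem_biUnion]
    constructor
    · rintro ⟨⟨a, ha, hta⟩, hP⟩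
      by_cases hc : a = a0
      · subst hc; exact ⟨hta, hP⟩
      · exfalso
        have h2 := h a ha hc
        rw [Finset.filter_eq_empty_iff] at h2
        exact h2 hta hP
    · rintro ⟨ht, hP⟩
      exact ⟨⟨a0, h0, ht⟩, hP⟩
  rw [key, h1]

def L10 : List (Fin 5 → Fin 10) :=
  [![2,0,4,8,6], ![9,7,0,3,1], ![8,5,1,9,2], ![3,6,5,7,4],
   ![4,2,1,5,3], ![7,9,5,6,8], ![1,8,4,0,7], ![6,3,0,2,9]]
def D10 : Finset (Fin 5 → Fin 10) := ⟨(L10 : Multiset _), by decide⟩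
def L12 : List (Fin 5 → Fin 12) :=
  [![0,1,4,9,11], ![1,2,5,10,0], ![2,3,6,11,1], ![3,4,7,0,2],
   ![4,5,8,1,3], ![5,6,9,2,4], ![6,7,10,3,5], ![7,8,11,4,6],
   ![8,9,0,5,7], ![9,10,1,6,8], ![10,11,2,7,9], ![11,0,3,8,10]]
def D12 : Finset (Fin 5 → Fin 12) := ⟨(L12 : Multiset _), by decide⟩

lemma D10_inj : ∀ b ∈ D10, Function.Injective b := by
  intro b hb
  simp only [D10, L10, Finset.mem_mk, Multiset.mem_coe, List.mem_cons,
    List.not_mem_nil, or_false] at hb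
  rcases hb with h|h|h|h|h|h|h|h <;> subst h <;> decide

lemma D12_inj : ∀ b ∈ D12, Function.Injective b := by
  intro b hb
  simp only [D12, L12, Finset.mem_mk, Multiset.mem_coe, List.mem_cons,
    List.not_mem_nil, or_false] at hb
  rcases hb with h|h|h|h|h|h|h|h|h|h|h|h <;> subst h <;> decide

lemma D10_count : ∀ x y : Fin 10, x ≠ y →
    (D10.filter (fun b => coversPair b x y)).card = if (x:ℕ) % 5 = (y:ℕ) % 5 then 0 else 1 := by
  decide

lemma D12_count : ∀ x y : Fin 12, x ≠ y →
    (D12.filter (fun b => coversPair b x y)).card = if (x:ℕ) % 6 = (y:ℕ) % 6 then 0 else 1 := by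
  decide

def bset (v : ℕ) (b : Finset (Fin v)) : Finset (Fin 5 → Fin (2*v+1)) :=
  if h : b.card = 5 then D10.image (fun t => emb v 5 (fun i => b.orderEmbOfFin h i) ∘ t)
  else if h6 : b.card = 6 then D12.image (fun t => emb v 6 (fun i => b.orderEmbOfFin h6 i) ∘ t)
  else ∅

lemma bset_filter_empty (v : ℕ) (b : Finset (Fin v)) (p q : Fin (2*v+1))
    (h : ((p:ℕ) = 2*v ∨ ∀ x ∈ b, (p:ℕ) ≠ (x:ℕ) ∧ (p:ℕ) ≠ (x:ℕ) + v) ∨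
         ((q:ℕ) = 2*v ∨ ∀ x ∈ b, (q:ℕ) ≠ (x:ℕ) ∧ (q:ℕ) ≠ (x:ℕ) + v)) :
    (bset v b).filter (fun t => coversPair t p q) = ∅ := by
  unfold bset
  have main : ∀ (c : ℕ) (σ : Fin c → Fin v) (D : Finset (Fin 5 → Fin (2*c))),
      (∀ i, σ i ∈ b) →
      (D.image (fun t => emb v c σ ∘ t)).filter (fun t => coversPair t p q) = ∅ := by
    intro c σ D hmem
    apply filter_image_empty
    have key : ∀ r : Fin (2*v+1), ((r:ℕ) = 2*v ∨ ∀ x ∈ b, (r:ℕ) ≠ (x:ℕ) ∧ (r:ℕ) ≠ (x:ℕ) + v) →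
        ∀ k, emb v c σ k ≠ r := by
      intro r hr k hk
      obtain ⟨i, _, hiv⟩ := emb_cases v c σ k
      have hlt := emb_lt v c σ k
      have hval : (emb v c σ k : ℕ) = (r : ℕ) := by rw [hk]
      rcases hr with hr | hr
      · omega
      · have h2 := hr (σ i) (hmem i)
        rcases hiv with ⟨_, h5⟩ | ⟨_, h5⟩ <;> omega
    rcases h with h | h
    · exact Or.inl (key p h)
    · exact Or.inr (key q h)
  split_ifs with h5 h6
  · exact main 5 _ D10 (fun i => Finset.orderEmbOfFin_mem b h5 i)
  · exact main 6 _ D12 (fun i => Finset.orderEmbOfFin_mem b h6 i)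
  · simp

lemma bset_surj (v : ℕ) (b : Finset (Fin v)) {k : ℕ} (h : b.card = k) :
    ∀ x ∈ b, ∃ i : Fin k, b.orderEmbOfFin h i = x := by
  intro x hx
  have : x ∈ Set.range (b.orderEmbOfFin h) := by
    rw [Finset.range_orderEmbOfFin]; exact hx
  exact this

lemma bset_filter_one (v : ℕ) (b : Finset (Fin v)) (p q : Fin (2*v+1)) (hpq : p ≠ q)
    (px py : Fin v)
    (hpv : (p:ℕ) = (px:ℕ) ∨ (p:ℕ) = (px:ℕ) + v) (hqv : (q:ℕ) = (py:ℕ) ∨ (q:ℕ) = (py:ℕ) + v)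
    (hxb : px ∈ b) (hyb : py ∈ b) (hne : px ≠ py) (hb : b.card = 5 ∨ b.card = 6) :
    ((bset v b).filter (fun t => coversPair t p q)).card = 1 := by
  unfold bset
  have main : ∀ (c : ℕ) (σ : Fin c → Fin v) (D : Finset (Fin 5 → Fin (2*c))),
      Function.Injective σ → (∀ x ∈ b, ∃ i, σ i = x) →
      (∀ x y : Fin (2*c), x ≠ y → (D.filter (fun t => coversPair t x y)).card
        = if (x:ℕ) % c = (y:ℕ) % c then 0 else 1) →
      ((D.image (fun t => emb v c σ ∘ t)).filter (fun t => coversPair t p q)).card = 1 := by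
    intro c σ D hσ hsurj hcnt
    obtain ⟨i, hi⟩ := hsurj px hxb
    obtain ⟨j, hj⟩ := hsurj py hyb
    obtain ⟨k, hk, hkm⟩ := emb_exists v c σ p i (by rw [hi]; exact hpv)
    obtain ⟨l, hl, hlm⟩ := emb_exists v c σ q j (by rw [hj]; exact hqv)
    rw [← hk, ← hl, filter_image_card _ (emb_inj v c σ hσ)]
    rw [hcnt k l (fun hkl => hpq (by rw [← hk, ← hl, hkl]))]
    rw [if_neg]
    intro hmod
    rw [hkm, hlm] at hmod
    exact hne (by rw [← hi, ← hj]; exact congrArg σ (Fin.ext hmod))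
  split_ifs with h5 h6
  · exact main 5 _ D10 (b.orderEmbOfFin h5).injective (bset_surj v b h5) D10_count
  · exact main 6 _ D12 (b.orderEmbOfFin h6).injective (bset_surj v b h6) D12_count
  · rcases hb with h | h <;> [exact absurd h h5; exact absurd h h6]

lemma bset_filter_same (v : ℕ) (b : Finset (Fin v)) (p q : Fin (2*v+1)) (hpq : p ≠ q)
    (px : Fin v)
    (hpv : (p:ℕ) = (px:ℕ) ∨ (p:ℕ) = (px:ℕ) + v) (hqv : (q:ℕ) = (px:ℕ) ∨ (q:ℕ) = (px:ℕ) + v)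
    (hxb : px ∈ b) :
    (bset v b).filter (fun t => coversPair t p q) = ∅ := by
  unfold bset
  have main : ∀ (c : ℕ) (σ : Fin c → Fin v) (D : Finset (Fin 5 → Fin (2*c))),
      Function.Injective σ → (∀ x ∈ b, ∃ i, σ i = x) →
      (∀ x y : Fin (2*c), x ≠ y → (D.filter (fun t => coversPair t x y)).card
        = if (x:ℕ) % c = (y:ℕ) % c then 0 else 1) →
      (D.image (fun t => emb v c σ ∘ t)).filter (fun t => coversPair t p q) = ∅ := by
    intro c σ D hσ hsurj hcnt
    obtain ⟨i, hi⟩ := hsurj px hxb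
    obtain ⟨k, hk, hkm⟩ := emb_exists v c σ p i (by rw [hi]; exact hpv)
    obtain ⟨l, hl, hlm⟩ := emb_exists v c σ q i (by rw [hi]; exact hqv)
    rw [← Finset.card_eq_zero, ← hk, ← hl, filter_image_card _ (emb_inj v c σ hσ)]
    rw [hcnt k l (fun hkl => hpq (by rw [← hk, ← hl, hkl]))]
    rw [if_pos (by rw [hkm, hlm])]
  split_ifs with h5 h6
  · exact main 5 _ D10 (b.orderEmbOfFin h5).injective (bset_surj v b h5) D10_count
  · exact main 6 _ D12 (b.orderEmbOfFin h6).injective (bset_surj v b h6) D12_count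
  · simp

def gset (v : ℕ) (g : Finset (Fin v)) (Dg : Finset (Fin 5 → Fin (2*g.card+1))) :
    Finset (Fin 5 → Fin (2*v+1)) :=
  Dg.image (fun t => embG v g.card (fun i => g.orderEmbOfFin rfl i) ∘ t)

lemma gset_filter_empty (v : ℕ) (g : Finset (Fin v)) (Dg : Finset (Fin 5 → Fin (2*g.card+1)))
    (p q : Fin (2*v+1))
    (h : ((p:ℕ) ≠ 2*v ∧ ∀ x ∈ g, (p:ℕ) ≠ (x:ℕ) ∧ (p:ℕ) ≠ (x:ℕ) + v) ∨
         ((q:ℕ) ≠ 2*v ∧ ∀ x ∈ g, (q:ℕ) ≠ (x:ℕ) ∧ (q:ℕ) ≠ (x:ℕ) + v)) :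
    (gset v g Dg).filter (fun t => coversPair t p q) = ∅ := by
  unfold gset
  apply filter_image_empty
  have key : ∀ r : Fin (2*v+1),
      ((r:ℕ) ≠ 2*v ∧ ∀ x ∈ g, (r:ℕ) ≠ (x:ℕ) ∧ (r:ℕ) ≠ (x:ℕ) + v) →
      ∀ k, embG v g.card (fun i => g.orderEmbOfFin rfl i) k ≠ r := by
    intro r hr k hk
    have hval : (embG v g.card (fun i => g.orderEmbOfFin rfl i) k : ℕ) = (r : ℕ) := by rw [hk]
    rcases embG_cases v g.card (fun i => g.orderEmbOfFin rfl i) k with ⟨_, hv⟩ | ⟨i, hiv⟩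
    · exact hr.1 (by omega)
    · have h2 := hr.2 (g.orderEmbOfFin rfl i) (Finset.orderEmbOfFin_mem g rfl i)
      rcases hiv with ⟨_, h5⟩ | ⟨_, h5⟩ <;> omega
  rcases h with h | h
  · exact Or.inl (key p h)
  · exact Or.inr (key q h)

lemma gset_filter_one (v : ℕ) (g : Finset (Fin v)) (Dg : Finset (Fin 5 → Fin (2*g.card+1)))
    (hcnt : ∀ x y : Fin (2*g.card+1), x ≠ y →
      (Dg.filter (fun t => coversPair t x y)).card = 1)
    (p q : Fin (2*v+1)) (hpq : p ≠ q)
    (hk : ∃ k, embG v g.card (fun i => g.orderEmbOfFin rfl i) k = p)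
    (hl : ∃ l, embG v g.card (fun i => g.orderEmbOfFin rfl i) l = q) :
    ((gset v g Dg).filter (fun t => coversPair t p q)).card = 1 := by
  unfold gset
  obtain ⟨k, hk⟩ := hk
  obtain ⟨l, hl⟩ := hl
  rw [← hk, ← hl,
    filter_image_card _ (embG_inj v g.card _ (g.orderEmbOfFin rfl).injective)]
  exact hcnt k l (fun hkl => hpq (by rw [← hk, ← hl, hkl]))

lemma bset_inj (v : ℕ) (b : Finset (Fin v)) : ∀ t ∈ bset v b, Function.Injective t := by
  unfold bset
  split_ifs with h5 h6 <;> intro t ht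
  · obtain ⟨t', ht', rfl⟩ := Finset.mem_image.mp ht
    exact (emb_inj v 5 _ (b.orderEmbOfFin h5).injective).comp (D10_inj t' ht')
  · obtain ⟨t', ht', rfl⟩ := Finset.mem_image.mp ht
    exact (emb_inj v 6 _ (b.orderEmbOfFin h6).injective).comp (D12_inj t' ht')
  · simp at ht

lemma gset_inj (v : ℕ) (g : Finset (Fin v)) (Dg : Finset (Fin 5 → Fin (2*g.card+1)))
    (hinj : ∀ t ∈ Dg, Function.Injective t) : ∀ t ∈ gset v g Dg, Function.Injective t := by
  intro t ht
  obtain ⟨t', ht', rfl⟩ := Finset.mem_image.mp ht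
  exact (embG_inj v g.card _ (g.orderEmbOfFin rfl).injective).comp (hinj t' ht')

lemma not_double (v : ℕ) (p : Fin (2*v+1)) (px : Fin v)
    (hpv : (p:ℕ) = (px:ℕ) ∨ (p:ℕ) = (px:ℕ) + v) (s : Finset (Fin v)) (hxs : px ∉ s) :
    ∀ x ∈ s, (p:ℕ) ≠ (x:ℕ) ∧ (p:ℕ) ≠ (x:ℕ) + v := by
  intro x hx
  have h1 := x.isLt; have h2 := px.isLt
  rcases hpv with hpv | hpv <;> constructor <;> intro h <;>
  · have hh : px = x := Fin.ext (by omega)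
    exact hxs (by rw [hh]; exact hx)

theorem construction_from_GDD (v : ℕ) (groups B : Finset (Finset (Fin v)))
    (hGDD : IsGDD v groups B)
    (hsizes : ∀ g ∈ groups, g.card % 5 = 0 ∨ g.card % 5 = 2)
    (hgroupDD : ∀ g ∈ groups,
      ∃ D : Finset (Fin 5 → Fin (2 * g.card + 1)), IsDD (2 * g.card + 1) D) :
    ∃ D : Finset (Fin 5 → Fin (2 * v + 1)), IsDD (2 * v + 1) D := by
  obtain ⟨hpart, hbsz, hinG, hcross⟩ := hGDD
  choose Dg hDg using hgroupDD
  refine ⟨(B.biUnion (fun b => bset v b)) ∪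
          (groups.attach.biUnion (fun g => gset v g.1 (Dg g.1 g.2))), ?_, ?_⟩
  · intro t ht
    rcases Finset.mem_union.mp ht with ht | ht
    · obtain ⟨b, _, htb⟩ := Finset.mem_biUnion.mp ht
      exact bset_inj v b t htb
    · obtain ⟨gg, _, htg⟩ := Finset.mem_biUnion.mp ht
      exact gset_inj v gg.1 _ (hDg gg.1 gg.2).1 t htg
  · intro p q hpq
    rw [Finset.filter_union]
    -- helper to get the base point of a non-infinity point
    have base : ∀ r : Fin (2*v+1), (r:ℕ) ≠ 2*v →
        ∃ y : Fin v, (r:ℕ) = (y:ℕ) ∨ (r:ℕ) = (y:ℕ) + v := by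
      intro r hr
      have := r.isLt
      rcases lt_or_ge (r:ℕ) v with h | h
      · exact ⟨⟨r, h⟩, Or.inl rfl⟩
      · exact ⟨⟨(r:ℕ) - v, by omega⟩, Or.inr (by simp; omega)⟩
    have Yone : ∀ (g0 : Finset (Fin v)) (hg0 : g0 ∈ groups),
        (∃ k, embG v g0.card (fun i => g0.orderEmbOfFin rfl i) k = p) →
        (∃ l, embG v g0.card (fun i => g0.orderEmbOfFin rfl i) l = q) →
        (∀ a : {x // x ∈ groups}, a.1 ≠ g0 →
          (gset v a.1 (Dg a.1 a.2)).filter (fun t => coversPair t p q) = ∅) →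
        ((groups.attach.biUnion (fun g => gset v g.1 (Dg g.1 g.2))).filter
          (fun t => coversPair t p q)).card = 1 := by
      intro g0 hg0 hk hl hoth
      apply filter_biUnion_one _ _ _ ⟨g0, hg0⟩ (Finset.mem_attach _ _)
      · exact gset_filter_one v g0 (Dg g0 hg0) (hDg g0 hg0).2 p q hpq hk hl
      · intro a _ hne
        exact hoth a (fun h => hne (Subtype.ext h))
    by_cases hpi : (p:ℕ) = 2*v
    · -- p is the infinity point
      have hqi : (q:ℕ) ≠ 2*v := fun h => hpq (Fin.ext (by omega))
      obtain ⟨qy, hqv⟩ := base q hqi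
      obtain ⟨g0, ⟨hg0m, hg0y⟩, hg0u⟩ := hpart qy
      have hX : (B.biUnion (fun b => bset v b)).filter (fun t => coversPair t p q) = ∅ :=
        filter_biUnion_empty _ _ _ (fun b _ => bset_filter_empty v b p q (Or.inl (Or.inl hpi)))
      have hY := Yone g0 hg0m
        ⟨⟨2*g0.card, by omega⟩, by rw [embG_last]; exact Fin.ext (by simp; omega)⟩
        (by obtain ⟨i, hi⟩ := bset_surj v g0 rfl qy hg0y
            exact embG_exists v g0.card (fun i => g0.orderEmbOfFin rfl i) q i
              (by simp only [hi]; exact hqv))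
        (by intro a hne
            have hy : qy ∉ a.1 := fun hmem => hne (hg0u a.1 ⟨a.2, hmem⟩)
            exact gset_filter_empty v a.1 _ p q (Or.inr ⟨hqi, not_double v q qy hqv a.1 hy⟩))
      rw [hX, Finset.empty_union]; exact hY
    · obtain ⟨px, hpv⟩ := base p hpi
      obtain ⟨g0, ⟨hg0m, hg0x⟩, hg0u⟩ := hpart px
      obtain ⟨i0, hi0⟩ := bset_surj v g0 rfl px hg0x
      have hkp : ∃ k, embG v g0.card (fun i => g0.orderEmbOfFin rfl i) k = p :=
        embG_exists v g0.card (fun i => g0.orderEmbOfFin rfl i) p i0 (by simp only [hi0]; exact hpv)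
      have hothp : ∀ a : {x // x ∈ groups}, a.1 ≠ g0 →
          (gset v a.1 (Dg a.1 a.2)).filter (fun t => coversPair t p q) = ∅ := by
        intro a hne
        have hy : px ∉ a.1 := fun hmem => hne (hg0u a.1 ⟨a.2, hmem⟩)
        exact gset_filter_empty v a.1 _ p q (Or.inl ⟨hpi, not_double v p px hpv a.1 hy⟩)
      by_cases hqi : (q:ℕ) = 2*v
      · -- q is the infinity point
        have hX : (B.biUnion (fun b => bset v b)).filter (fun t => coversPair t p q) = ∅ :=
          filter_biUnion_empty _ _ _ (fun b _ => bset_filter_empty v b p q (Or.inr (Or.inl hqi)))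
        have hY := Yone g0 hg0m hkp
          ⟨⟨2*g0.card, by omega⟩, by rw [embG_last]; exact Fin.ext (by simp; omega)⟩
          hothp
        rw [hX, Finset.empty_union]; exact hY
      · obtain ⟨py, hqv⟩ := base q hqi
        by_cases hxy : px = py
        · -- two copies of the same base point
          have hqv' : (q:ℕ) = (px:ℕ) ∨ (q:ℕ) = (px:ℕ) + v := by rw [hxy]; exact hqv
          have hX : (B.biUnion (fun b => bset v b)).filter (fun t => coversPair t p q) = ∅ := by
            apply filter_biUnion_empty
            intro b _
            by_cases hxb : px ∈ b
            · exact bset_filter_same v b p q hpq px hpv hqv' hxb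
            · exact bset_filter_empty v b p q (Or.inl (Or.inr (not_double v p px hpv b hxb)))
          have hY := Yone g0 hg0m hkp
            (embG_exists v g0.card (fun i => g0.orderEmbOfFin rfl i) q i0
              (by simp only [hi0]; exact hqv'))
            hothp
          rw [hX, Finset.empty_union]; exact hY
        · by_cases hsg : sameGroup groups px py
          · -- same group, different base points
            have h0 := hinG px py hxy hsg
            rw [Finset.card_eq_zero, Finset.filter_eq_empty_iff] at h0
            have hX : (B.biUnion (fun b => bset v b)).filter (fun t => coversPair t p q) = ∅ := by
              apply filter_biUnion_empty
              intro b hb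
              rcases not_and_or.mp (h0 hb) with h | h
              · exact bset_filter_empty v b p q (Or.inl (Or.inr (not_double v p px hpv b h)))
              · exact bset_filter_empty v b p q (Or.inr (Or.inr (not_double v q py hqv b h)))
            obtain ⟨g1, hg1, hxg1, hyg1⟩ := hsg
            have hg1g0 : g1 = g0 := hg0u g1 ⟨hg1, hxg1⟩
            rw [hg1g0] at hyg1
            obtain ⟨j0, hj0⟩ := bset_surj v g0 rfl py hyg1
            have hY := Yone g0 hg0m hkp
              (embG_exists v g0.card (fun i => g0.orderEmbOfFin rfl i) q j0
                (by simp only [hj0]; exact hqv))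
              hothp
            rw [hX, Finset.empty_union]; exact hY
          · -- different groups: exactly one block covers
            have h1 := hcross px py hxy hsg
            rw [Finset.card_eq_one] at h1
            obtain ⟨b0, hb0⟩ := h1
            have hb0f : b0 ∈ B.filter (fun b => px ∈ b ∧ py ∈ b) :=
              hb0 ▸ Finset.mem_singleton_self b0
            have hb0m := Finset.mem_filter.mp hb0f
            have huniq : ∀ b ∈ B, b ≠ b0 → ¬(px ∈ b ∧ py ∈ b) := by
              intro b hb hbne hxy'
              exact hbne (Finset.mem_singleton.mp
                (hb0 ▸ Finset.mem_filter.mpr ⟨hb, hxy'⟩))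
            have hX : ((B.biUnion (fun b => bset v b)).filter
                (fun t => coversPair t p q)).card = 1 := by
              apply filter_biUnion_one _ _ _ b0 hb0m.1
              · exact bset_filter_one v b0 p q hpq px py hpv hqv hb0m.2.1 hb0m.2.2 hxy
                  (hbsz b0 hb0m.1)
              · intro b hb hbne
                rcases not_and_or.mp (huniq b hb hbne) with h | h
                · exact bset_filter_empty v b p q (Or.inl (Or.inr (not_double v p px hpv b h)))
                · exact bset_filter_empty v b p q (Or.inr (Or.inr (not_double v q py hqv b h)))
            have hY : (groups.attach.biUnion (fun g => gset v g.1 (Dg g.1 g.2))).filter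
                (fun t => coversPair t p q) = ∅ := by
              apply filter_biUnion_empty
              intro a _
              have hno : ¬(px ∈ a.1 ∧ py ∈ a.1) := fun hc => hsg ⟨a.1, a.2, hc.1, hc.2⟩
              rcases not_and_or.mp hno with h | h
              · exact gset_filter_empty v a.1 _ p q (Or.inl ⟨hpi, not_double v p px hpv a.1 h⟩)
              · exact gset_filter_empty v a.1 _ p q (Or.inr ⟨hqi, not_double v q py hqv a.1 h⟩)
            rw [hY, Finset.union_empty]; exact hX
end

section
/- Intersection construction from GDDs: let (G,β) be a group divisible design of order v with r blocks of size 5, s blocks of size 6, and p groups each of size ≡ 0 or 2 (mod 5). If a_j ∈ I_G(10) for 1 ≤ j ≤ r, c_j ∈ I_G(12) for 1 ≤ j ≤ s, and d_i ∈ I_D(2|g_i|+1) for each group g_i, then there exist two 2-(2v+1,5,1) directed designs intersecting in exactly Σ a_j + Σ c_j + Σ d_i blocks. -/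
/-!
Replace every point `p` of the GDD by two copies `(p, 0)`, `(p, 1)` and add a point `∞`. On the
copies of a block `b` place the given 5-DGDD of type `2^|b|` whose groups are the pairs of copies
of a point, and on the copies of a group `g` together with `∞` place the given
2-(2|g|+1,5,1) directed design. Two copies of points in different groups of the GDD lie in the
copies of exactly one block, any other ordered pair of distinct new points lies in the piece of
exactly one group, and each piece covers precisely its own pairs, once; so the union of the pieces
is a directed design. A block determines its piece, hence two designs built this way meet in the
sum of the intersections of the pieces.
-/

open Finset Function

open Classical in
def Realizes {N : ℕ} (T : Finset (Fin 5 → Fin N)) (R : Fin N → Fin N → Prop) : Prop :=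
  (∀ t ∈ T, Injective t) ∧
    ∀ x y, x ≠ y → #(T.filter (coversPair · x y)) = if R x y then 1 else 0

def intersectionSpectrum {N : ℕ} (R : Fin N → Fin N → Prop) : Set ℕ :=
  {m | ∃ T₁ T₂, Realizes T₁ R ∧ Realizes T₂ R ∧ #(T₁ ∩ T₂) = m}

theorem isDD_iff_realizes {N : ℕ} {D : Finset (Fin 5 → Fin N)} :
    IsDD N D ↔ Realizes D fun _ _ => True := by
  simp [IsDD, Realizes]

theorem IDset_eq_intersectionSpectrum (N : ℕ) :
    IDset N = intersectionSpectrum fun _ _ : Fin N => True := by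
  simp [IDset, intersectionSpectrum, isDD_iff_realizes]

theorem IsDGDD.realizes {n : ℕ} {gs : Finset (Finset (Fin n))} {D : Finset (Fin 5 → Fin n)}
    (hD : IsDGDD n gs D) : Realizes D fun x y => ¬sameGroup gs x y := by
  refine ⟨hD.1, fun x y hxy => ?_⟩
  by_cases hxy' : sameGroup gs x y
  · simp [hxy', hD.2.1 x y hxy hxy']
  · simp [hxy', hD.2.2 x y hxy hxy']

theorem coversPair_comp_iff {N M : ℕ} {e : Fin N → Fin M} (he : Injective e)
    (t : Fin 5 → Fin N) (x y : Fin N) :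
    coversPair (e ∘ t) (e x) (e y) ↔ coversPair t x y := by
  simp [coversPair, he.eq_iff]

namespace Realizes

variable {N : ℕ} {T : Finset (Fin 5 → Fin N)} {R : Fin N → Fin N → Prop}

theorem rel_of_mem (hT : Realizes T R) {t : Fin 5 → Fin N} (ht : t ∈ T) : R (t 0) (t 1) := by
  by_contra hR
  have hcard := hT.2 _ _ ((hT.1 t ht).ne (show (0 : Fin 5) ≠ 1 by decide))
  rw [if_neg hR, card_eq_zero, filter_eq_empty_iff] at hcard
  exact hcard ht ⟨0, 1, by decide, rfl, rfl⟩

theorem map {M : ℕ} {e : Fin N → Fin M} (he : Injective e) (hT : Realizes T R)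
    {R' : Fin M → Fin M → Prop} (hR : ∀ x y, R' (e x) (e y) ↔ R x y)
    (hrange : ∀ x y, R' x y → x ∈ Set.range e ∧ y ∈ Set.range e) :
    Realizes (T.image (e ∘ ·)) R' := by
  refine ⟨?_, fun x y hxy => ?_⟩
  · simp only [mem_image]
    rintro _ ⟨t, ht, rfl⟩
    exact he.comp (hT.1 t ht)
  by_cases hxy' : x ∈ Set.range e ∧ y ∈ Set.range e
  · obtain ⟨⟨x, rfl⟩, ⟨y, rfl⟩⟩ := hxy'
    rw [hR, ← hT.2 x y (he.ne_iff.1 hxy), filter_image,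
      card_image_of_injective _ he.comp_left]
    exact congrArg card (filter_congr fun t _ => coversPair_comp_iff he t x y)
  · rw [if_neg fun h => hxy' (hrange x y h), card_eq_zero, filter_eq_empty_iff]
    simp only [mem_image]
    rintro _ ⟨t, -, rfl⟩ ⟨i, j, -, hi, hj⟩
    exact hxy' ⟨⟨t i, hi⟩, ⟨t j, hj⟩⟩

end Realizes

theorem intersectionSpectrum_subset_of_embedding {N M : ℕ} {e : Fin N → Fin M}
    (he : Injective e) {R : Fin N → Fin N → Prop} {R' : Fin M → Fin M → Prop}
    (hR : ∀ x y, R' (e x) (e y) ↔ R x y)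
    (hrange : ∀ x y, R' x y → x ∈ Set.range e ∧ y ∈ Set.range e) :
    intersectionSpectrum R ⊆ intersectionSpectrum R' := by
  rintro _ ⟨T₁, T₂, h₁, h₂, rfl⟩
  refine ⟨_, _, h₁.map he hR hrange, h₂.map he hR hrange, ?_⟩
  rw [← image_inter _ _ he.comp_left, card_image_of_injective _ he.comp_left]

section Gluing

open Classical

variable {ι : Type*} {N : ℕ} {I : Finset ι} {R : ι → Fin N → Fin N → Prop}

theorem eq_of_mem_of_realizes (hR : ∀ x y, x ≠ y → #(I.filter (R · x y)) = 1)
    {k k' : ι} (hk : k ∈ I) (hk' : k' ∈ I) {T T' : Finset (Fin 5 → Fin N)}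
    (hT : Realizes T (R k)) (hT' : Realizes T' (R k')) {t : Fin 5 → Fin N}
    (ht : t ∈ T) (ht' : t ∈ T') : k = k' :=
  card_le_one.1 (hR _ _ ((hT.1 t ht).ne (by decide))).le k
    (mem_filter.2 ⟨hk, hT.rel_of_mem ht⟩) k' (mem_filter.2 ⟨hk', hT'.rel_of_mem ht'⟩)

variable {T T₁ T₂ : ι → Finset (Fin 5 → Fin N)}

theorem pairwiseDisjoint_of_realizes (hT : ∀ k ∈ I, Realizes (T k) (R k))
    (hR : ∀ x y, x ≠ y → #(I.filter (R · x y)) = 1) : (I : Set ι).PairwiseDisjoint T :=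
  fun k hk k' hk' hne => disjoint_left.2 fun _ ht ht' =>
    hne (eq_of_mem_of_realizes hR hk hk' (hT k hk) (hT k' hk') ht ht')

theorem isDD_biUnion (hT : ∀ k ∈ I, Realizes (T k) (R k))
    (hR : ∀ x y, x ≠ y → #(I.filter (R · x y)) = 1) : IsDD N (I.biUnion T) := by
  refine ⟨fun t ht => ?_, fun x y hxy => ?_⟩
  · obtain ⟨k, hk, htk⟩ := mem_biUnion.1 ht
    exact (hT k hk).1 t htk
  calc #((I.biUnion T).filter (coversPair · x y))
      = ∑ k ∈ I, #((T k).filter (coversPair · x y)) := by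
        rw [filter_biUnion, card_biUnion]
        exact (pairwiseDisjoint_of_realizes hT hR).mono fun k => filter_subset _ _
    _ = ∑ k ∈ I, if R k x y then 1 else 0 := sum_congr rfl fun k hk => (hT k hk).2 x y hxy
    _ = 1 := by rw [← card_filter]; exact hR x y hxy

theorem card_biUnion_inter_biUnion (hT₁ : ∀ k ∈ I, Realizes (T₁ k) (R k))
    (hT₂ : ∀ k ∈ I, Realizes (T₂ k) (R k)) (hR : ∀ x y, x ≠ y → #(I.filter (R · x y)) = 1) :
    #(I.biUnion T₁ ∩ I.biUnion T₂) = ∑ k ∈ I, #(T₁ k ∩ T₂ k) := by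
  have hinter : I.biUnion T₁ ∩ I.biUnion T₂ = I.biUnion fun k => T₁ k ∩ T₂ k := by
    ext t
    simp only [mem_inter, mem_biUnion]
    constructor
    · rintro ⟨⟨k, hk, ht₁⟩, ⟨k', hk', ht₂⟩⟩
      obtain rfl := eq_of_mem_of_realizes hR hk hk' (hT₁ k hk) (hT₂ k' hk') ht₁ ht₂
      exact ⟨k, hk, ht₁, ht₂⟩
    · rintro ⟨k, hk, ht₁, ht₂⟩
      exact ⟨⟨k, hk, ht₁⟩, ⟨k, hk, ht₂⟩⟩
  rw [hinter, card_biUnion]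
  exact (pairwiseDisjoint_of_realizes hT₁ hR).mono fun k => inter_subset_left

theorem sum_mem_IDset {m : ι → ℕ} (hm : ∀ k ∈ I, m k ∈ intersectionSpectrum (R k))
    (hR : ∀ x y, x ≠ y → #(I.filter (R · x y)) = 1) : ∑ k ∈ I, m k ∈ IDset N := by
  choose! T₁ T₂ hT₁ hT₂ hcard using hm
  refine ⟨I.biUnion T₁, I.biUnion T₂, isDD_biUnion hT₁ hR, isDD_biUnion hT₂ hR, ?_⟩
  rw [card_biUnion_inter_biUnion hT₁ hT₂ hR]
  exact sum_congr rfl hcard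

end Gluing

section Doubling

variable {v : ℕ}

/-- `some (p, i)` is the `i`-th copy of the point `p` and `none` is the point `∞`. -/
noncomputable def doubledEquiv (v : ℕ) : Option (Fin v × Fin 2) ≃ Fin (2 * v + 1) :=
  Fintype.equivFinOfCardEq (by simp [mul_comm])

noncomputable def basePoint (z : Fin (2 * v + 1)) : Option (Fin v) :=
  ((doubledEquiv v).symm z).map Prod.fst

@[simp]
theorem basePoint_doubledEquiv (o : Option (Fin v × Fin 2)) :
    basePoint (doubledEquiv v o) = o.map Prod.fst := by
  simp [basePoint]

/-- The ordered pairs covered by the DGDD placed on the copies of the block `b`; `groupRel g` is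
the analogue for the directed design on the copies of the group `g` together with `∞`. -/
def blockRel (b : Finset (Fin v)) (x y : Fin (2 * v + 1)) : Prop :=
  ∃ p ∈ basePoint x, ∃ q ∈ basePoint y, p ≠ q ∧ p ∈ b ∧ q ∈ b

def groupRel (g : Finset (Fin v)) (x y : Fin (2 * v + 1)) : Prop :=
  (∀ p ∈ basePoint x, p ∈ g) ∧ ∀ q ∈ basePoint y, q ∈ g

end Doubling

namespace IsGroupPartition

variable {n : ℕ} {gs : Finset (Finset (Fin n))}

theorem sameGroup_refl (hp : IsGroupPartition n gs) (x : Fin n) : sameGroup gs x x :=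
  let ⟨g, ⟨hg, hx⟩, _⟩ := hp x
  ⟨g, hg, hx, hx⟩

theorem card_filter_mem_mem (hp : IsGroupPartition n gs) {x y : Fin n}
    (hxy : sameGroup gs x y) : #(gs.filter fun g => x ∈ g ∧ y ∈ g) = 1 := by
  obtain ⟨g, hg, hx, hy⟩ := hxy
  refine card_eq_one.2 ⟨g, ext fun g' => ?_⟩
  simp only [mem_filter, mem_singleton]
  constructor
  · rintro ⟨hg', hx', -⟩
    exact (hp x).unique ⟨hg', hx'⟩ ⟨hg, hx⟩
  · rintro rfl
    exact ⟨hg, hx, hy⟩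

theorem card_filter_mem (hp : IsGroupPartition n gs) (x : Fin n) :
    #(gs.filter (x ∈ ·)) = 1 := by
  simpa using hp.card_filter_mem_mem (hp.sameGroup_refl x)

end IsGroupPartition

open Classical in
theorem IsGDD.card_filter_blockRel_add_card_filter_groupRel {v : ℕ}
    {groups B : Finset (Finset (Fin v))} (hGDD : IsGDD v groups B)
    {x y : Fin (2 * v + 1)} (hxy : x ≠ y) :
    #(B.filter (blockRel · x y)) + #(groups.filter (groupRel · x y)) = 1 := by
  obtain ⟨hpart, -, hsame, hdiff⟩ := hGDD
  obtain ⟨X, rfl⟩ := (doubledEquiv v).surjective x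
  obtain ⟨Y, rfl⟩ := (doubledEquiv v).surjective y
  rcases X with _ | ⟨p, i⟩ <;> rcases Y with _ | ⟨q, j⟩
  · exact absurd rfl hxy
  · simpa [blockRel, groupRel] using hpart.card_filter_mem q
  · simpa [blockRel, groupRel] using hpart.card_filter_mem p
  simp only [blockRel, groupRel, basePoint_doubledEquiv, Option.map_some, Option.mem_def,
    Option.some.injEq, forall_eq']
  by_cases hpq : p = q
  · subst hpq
    simpa using hpart.card_filter_mem p
  simp only [exists_eq_left', ne_eq, hpq, not_false_eq_true, true_and]
  by_cases hs : sameGroup groups p q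
  · rw [hsame p q hpq hs, hpart.card_filter_mem_mem hs]
  · rw [hdiff p q hpq hs, card_eq_zero.2 (filter_eq_empty_iff.2 fun g hg hpq' =>
      hs ⟨g, hg, hpq'⟩)]

theorem IsGroupPartition.exists_equiv_prod_fin_two {n : ℕ} {gs : Finset (Finset (Fin n))}
    (hp : IsGroupPartition n gs) (h2 : ∀ g ∈ gs, #g = 2) {β : Type*} [Fintype β]
    (hβ : 2 * Fintype.card β = n) :
    ∃ ψ : Fin n ≃ β × Fin 2, ∀ x y, (ψ x).1 = (ψ y).1 ↔ sameGroup gs x y := by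
  classical
  choose G hG using fun x => (hp x).exists
  have hG_eq : ∀ x, ∀ g ∈ gs, x ∈ g → G x = g := fun x g hg hx =>
    (hp x).unique (hG x) ⟨hg, hx⟩
  have hfiber : ∀ g ∈ gs, univ.filter (G · = g) = g := fun g hg => by
    ext x
    simpa using ⟨fun h => h ▸ (hG x).2, hG_eq x g hg⟩
  have hcard : Fintype.card gs = Fintype.card β := by
    have := card_eq_sum_card_fiberwise (s := univ) (t := gs) (f := G) fun x _ => (hG x).1
    rw [card_univ, Fintype.card_fin, sum_congr rfl fun g hg => by rw [hfiber g hg, h2 g hg],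
      sum_const, smul_eq_mul] at this
    rw [Fintype.card_coe]
    omega
  let φ : gs ≃ β := Fintype.equivOfCardEq hcard
  let f : Fin n → β := fun x => φ ⟨G x, (hG x).1⟩
  have hfib : ∀ c, Fintype.card {x // f x = c} = Fintype.card {z : β × Fin 2 // z.1 = c} := by
    intro c
    have hf : univ.filter (f · = c) = univ.filter (G · = (φ.symm c).1) := by
      ext x
      simp [f, ← Equiv.eq_symm_apply, Subtype.ext_iff]
    have hfst : univ.filter (fun z : β × Fin 2 => z.1 = c) = {c} ×ˢ univ := by
      ext
      simp only [mem_filter, mem_univ, true_and, mem_product, mem_singleton, and_true]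
    rw [Fintype.card_subtype, Fintype.card_subtype, hf, hfst, hfiber _ (φ.symm c).2,
      h2 _ (φ.symm c).2, card_product]
    simp
  refine ⟨Equiv.ofFiberEquiv fun c => Fintype.equivOfCardEq (hfib c), fun x y => ?_⟩
  rw [Equiv.ofFiberEquiv_map (g := Prod.fst), Equiv.ofFiberEquiv_map (g := Prod.fst)]
  simp only [f, φ.injective.eq_iff, Subtype.mk.injEq]
  constructor
  · intro h
    exact ⟨G x, (hG x).1, (hG x).2, h ▸ (hG y).2⟩
  · rintro ⟨g, hg, hx, hy⟩
    rw [hG_eq x g hg hx, hG_eq y g hg hy]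

theorem intersectionSpectrum_subset_blockRel {v n : ℕ} {gs : Finset (Finset (Fin n))}
    (hp : IsGroupPartition n gs) (h2 : ∀ g ∈ gs, #g = 2) {b : Finset (Fin v)}
    (hn : 2 * #b = n) :
    intersectionSpectrum (fun x y : Fin n => ¬sameGroup gs x y) ⊆
      intersectionSpectrum (blockRel b) := by
  obtain ⟨ψ, hψ⟩ := hp.exists_equiv_prod_fin_two h2 (β := b) (by rwa [Fintype.card_coe])
  let e : Fin n → Fin (2 * v + 1) := fun x => doubledEquiv v (some ((ψ x).1, (ψ x).2))
  have he : Injective e := fun x y h => by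
    obtain ⟨h₁, h₂⟩ := Prod.mk.inj (Option.some_injective _ ((doubledEquiv v).injective h))
    exact ψ.injective (Prod.ext (Subtype.ext h₁) h₂)
  have hmem : ∀ z, ∀ p ∈ basePoint z, p ∈ b → z ∈ Set.range e := by
    intro z p hpz hpb
    obtain ⟨_ | ⟨p', i⟩, rfl⟩ := (doubledEquiv v).surjective z
    · simp at hpz
    · obtain rfl : p' = p := by simpa using hpz
      exact ⟨ψ.symm (⟨p', hpb⟩, i), by simp [e]⟩
  refine intersectionSpectrum_subset_of_embedding he (fun x y => ?_) ?_
  · rw [← hψ, Subtype.ext_iff]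
    simp [e, blockRel]
  · rintro x y ⟨p, hpx, q, hqy, -, hpb, hqb⟩
    exact ⟨hmem x p hpx hpb, hmem y q hqy hqb⟩

theorem intersectionSpectrum_subset_groupRel {v : ℕ} (g : Finset (Fin v)) :
    intersectionSpectrum (fun _ _ : Fin (2 * #g + 1) => True) ⊆
      intersectionSpectrum (groupRel g) := by
  let ι : Fin #g × Fin 2 → Fin v × Fin 2 := fun z => ((g.equivFin.symm z.1).1, z.2)
  have hι : Injective ι := fun z w h => by
    simpa [ι, Prod.ext_iff, Subtype.ext_iff] using h
  let e : Fin (2 * #g + 1) → Fin (2 * v + 1) :=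
    fun x => doubledEquiv v (((doubledEquiv #g).symm x).map ι)
  have he : Injective e :=
    (doubledEquiv v).injective.comp ((Option.map_injective hι).comp (doubledEquiv _).symm.injective)
  have hmem : ∀ z, (∀ p ∈ basePoint z, p ∈ g) → z ∈ Set.range e := by
    intro z hz
    obtain ⟨_ | ⟨p, i⟩, rfl⟩ := (doubledEquiv v).surjective z
    · exact ⟨doubledEquiv #g none, by simp [e]⟩
    · have hp : p ∈ g := hz p (by simp)
      exact ⟨doubledEquiv #g (some (g.equivFin ⟨p, hp⟩, i)), by simp [e, ι]⟩
  refine intersectionSpectrum_subset_of_embedding he (fun x y => ?_) ?_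
  · obtain ⟨X, rfl⟩ := (doubledEquiv #g).surjective x
    obtain ⟨Y, rfl⟩ := (doubledEquiv #g).surjective y
    cases X <;> cases Y <;> simp [e, ι, groupRel]
  · exact fun x y h => ⟨hmem x h.1, hmem y h.2⟩

theorem mem_intersectionSpectrum_blockRel_of_mem_IGset {v n m : ℕ} (hm : m ∈ IGset n)
    {b : Finset (Fin v)} (hn : 2 * #b = n) : m ∈ intersectionSpectrum (blockRel b) := by
  obtain ⟨gs, D₁, D₂, hp, h2, h₁, h₂, rfl⟩ := hm
  exact intersectionSpectrum_subset_blockRel hp h2 hn ⟨D₁, D₂, h₁.realizes, h₂.realizes, rfl⟩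

theorem intersection_construction_from_GDD_general (v : ℕ)
    (groups B : Finset (Finset (Fin v)))
    (hGDD : IsGDD v groups B)
    (a c d : Finset (Fin v) → ℕ)
    (ha : ∀ b ∈ B, b.card = 5 → a b ∈ IGset 10)
    (hc : ∀ b ∈ B, b.card = 6 → c b ∈ IGset 12)
    (hd : ∀ g ∈ groups, d g ∈ IDset (2 * g.card + 1)) :
    ∃ D1 D2 : Finset (Fin 5 → Fin (2 * v + 1)),
      IsDD (2 * v + 1) D1 ∧ IsDD (2 * v + 1) D2 ∧
      (D1 ∩ D2).card =
        (B.filter (fun b => b.card = 5)).sum a +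
        (B.filter (fun b => b.card = 6)).sum c +
        groups.sum d := by
  let m : Finset (Fin v) ⊕ Finset (Fin v) → ℕ := Sum.elim (fun b => if #b = 5 then a b else c b) d
  have hm : ∀ k ∈ B.disjSum groups, m k ∈ intersectionSpectrum (Sum.elim blockRel groupRel k) := by
    rintro (b | g) hk
    · have hb : b ∈ B := inl_mem_disjSum.1 hk
      rcases hGDD.2.1 b hb with h5 | h6
      · simpa [m, h5] using mem_intersectionSpectrum_blockRel_of_mem_IGset (ha b hb h5) (by omega)
      · simpa [m, h6] using mem_intersectionSpectrum_blockRel_of_mem_IGset (hc b hb h6) (by omega)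
    · have := hd g (inr_mem_disjSum.1 hk)
      rw [IDset_eq_intersectionSpectrum] at this
      exact intersectionSpectrum_subset_groupRel g this
  obtain ⟨D₁, D₂, h₁, h₂, hcard⟩ := sum_mem_IDset hm fun x y hxy => by
    rw [card_filter, sum_disjSum, ← card_filter, ← card_filter]
    exact hGDD.card_filter_blockRel_add_card_filter_groupRel hxy
  refine ⟨D₁, D₂, h₁, h₂, hcard.trans ?_⟩
  have h56 : B.filter (fun b => ¬#b = 5) = B.filter (fun b => #b = 6) :=
    filter_congr fun b hb => by rcases hGDD.2.1 b hb with h | h <;> simp [h]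
  simp only [m, sum_disjSum, Sum.elim_inl, Sum.elim_inr, sum_ite, h56]

theorem intersection_construction_from_GDD (v : ℕ)
    (groups B : Finset (Finset (Fin v)))
    (hGDD : IsGDD v groups B)
    (hsizes : ∀ g ∈ groups, g.card % 5 = 0 ∨ g.card % 5 = 2)
    (a c d : Finset (Fin v) → ℕ)
    (ha : ∀ b ∈ B, b.card = 5 → a b ∈ IGset 10)
    (hc : ∀ b ∈ B, b.card = 6 → c b ∈ IGset 12)
    (hd : ∀ g ∈ groups, d g ∈ IDset (2 * g.card + 1)) :
    ∃ D1 D2 : Finset (Fin 5 → Fin (2 * v + 1)),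
      IsDD (2 * v + 1) D1 ∧ IsDD (2 * v + 1) D2 ∧
      (D1 ∩ D2).card =
        (B.filter (fun b => b.card = 5)).sum a +
        (B.filter (fun b => b.card = 6)).sum c +
        groups.sum d :=
  intersection_construction_from_GDD_general v groups B hGDD a c d ha hc hd
end

section
/- The 12 ordered 5-tuples (1,3,0,7,6), (2,4,11,8,5), (0,10,5,1,4), (6,8,4,0,9), (4,2,10,6,7), (8,6,1,10,11), (11,9,6,2,3), (9,11,7,4,1), (3,1,9,5,8), (7,5,2,9,0), (5,7,3,11,10), (10,0,8,3,2) form a 5-DGDD of type 2^6 with groups {1,2}, {3,4}, {5,6}, {7,8}, {9,10}, {0,11}: every ordered pair of distinct elements from different groups appears in exactly one block, and no block contains two elements of the same group. -/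
set_option maxHeartbeats 4000000 in
theorem concrete_DGDD_type_2_6 :
    IsDGDD 12 ({{1,2},{3,4},{5,6},{7,8},{9,10},{0,11}} : Finset (Finset (Fin 12)))
      ({![1,3,0,7,6], ![2,4,11,8,5], ![0,10,5,1,4], ![6,8,4,0,9],
        ![4,2,10,6,7], ![8,6,1,10,11], ![11,9,6,2,3], ![9,11,7,4,1],
        ![3,1,9,5,8], ![7,5,2,9,0], ![5,7,3,11,10], ![10,0,8,3,2]} :
        Finset (Fin 5 → Fin 12)) := by
  refine ⟨?_, ?_, ?_⟩
  · intro b hb; fin_cases hb <;> decide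
  · intro x y; fin_cases x <;> fin_cases y <;> (unfold sameGroup; decide)
  · intro x y; fin_cases x <;> fin_cases y <;> (unfold sameGroup; decide)
end
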